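/- arXiv:1804.09501 — 10 statements merged into one kernel-verified Lean document; each statement's English description precedes it below -/
import Mathlib

section
/- (Vanishing of the upcrossing probability p_{ε,z}.) For every z > 0 one has lim_{ε→0⁺} (∫_ε^{2ε} g_ε(y) dy) / (∫_ε^{z} g_ε(y) dy) = 0. -/
open MeasureTheory Real Set Filter intervalIntegral
open scoped Topology

/-!
Since σ(0) = 0 < σ'(0), σ grows at least linearly: σ(l) ≥ c·l on [0, z]. Hence for y ∈ [ε, 2ε]
the exponent of g_ε(y) is at most ε·∫_y^z M/(c l)² dl ≤ M/c² with M = sup b₁, so the numerator is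
O(ε). The denominator is at least its part over [z/2, z], where dropping the nonnegative term
ε·b₁ bounds the exponent below by -∫_{z/2}^z b₂/σ², uniformly in ε.
-/

lemma exists_pos_mul_le_of_hasDerivWithinAt {f : ℝ → ℝ} {s z : ℝ}
    (hf : ContinuousOn f (Icc 0 z)) (hf0 : f 0 = 0) (hd : HasDerivWithinAt f s (Ici 0) 0)
    (hs : 0 < s) (hpos : ∀ x ∈ Ioc 0 z, 0 < f x) (hz : 0 ≤ z) :
    ∃ c > 0, ∀ x ∈ Icc 0 z, c * x ≤ f x := by
  set g := Function.update (slope f 0) 0 s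
  have hg_eq : ∀ x ≠ 0, g x = f x / x := fun x hx => by
    simp [g, hx, slope_fun_def_field, hf0]
  have hg : ContinuousOn g (Icc 0 z) := by
    intro x hx
    rcases eq_or_ne x 0 with rfl | hx0
    · rw [continuousWithinAt_update_same]
      exact (hasDerivWithinAt_iff_tendsto_slope.1 hd).mono_left
        (nhdsWithin_mono _ (sdiff_subset_sdiff_left Icc_subset_Ici_self))
    · rw [continuousWithinAt_update_of_ne hx0, slope_fun_def_field]
      exact ((hf x hx).sub continuousWithinAt_const).div
        (continuousWithinAt_id.sub continuousWithinAt_const) (sub_ne_zero.2 hx0)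
  obtain ⟨x₀, hx₀, hmin⟩ := isCompact_Icc.exists_isMinOn (nonempty_Icc.2 hz) hg
  have hg_pos : 0 < g x₀ := by
    rcases hx₀.1.eq_or_lt with rfl | hx₀0
    · simpa [g] using hs
    · rw [hg_eq x₀ hx₀0.ne']
      exact div_pos (hpos x₀ ⟨hx₀0, hx₀.2⟩) hx₀0
  refine ⟨g x₀, hg_pos, fun x hx => ?_⟩
  rcases hx.1.eq_or_lt with rfl | hx0
  · simp [hf0]
  · calc g x₀ * x ≤ g x * x := mul_le_mul_of_nonneg_right (hmin hx) hx.1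
      _ = f x := by rw [hg_eq x hx0.ne', div_mul_cancel₀ _ hx0.ne']

lemma integral_le_div_of_le_div_sq {F : ℝ → ℝ} {A y z : ℝ} (hA : 0 ≤ A) (hy : 0 < y)
    (hyz : y ≤ z) (hF : IntegrableOn F (Icc y z)) (hle : ∀ l ∈ Ioo y z, F l ≤ A / l ^ 2) :
    ∫ l in y..z, F l ≤ A / y := by
  have hcont : ContinuousOn (fun l => -(A * l⁻¹)) (Icc y z) :=
    (continuousOn_const.mul (continuousOn_inv₀.mono fun l hl => (hy.trans_le hl.1).ne')).neg
  have hderiv : ∀ x ∈ Ioo y z, HasDerivWithinAt (fun l => -(A * l⁻¹)) (A / x ^ 2) (Ioi x) x :=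
    fun x hx => (((hasDerivAt_inv (hy.trans hx.1).ne').const_mul A).neg.hasDerivWithinAt).congr_deriv
      (by ring)
  have hz : 0 ≤ A * z⁻¹ := mul_nonneg hA (inv_nonneg.2 (hy.le.trans hyz))
  rw [div_eq_mul_inv]
  linarith [integral_le_sub_of_hasDeriv_right_of_le hyz hcont hderiv hF hle]

lemma continuousOn_integral_left {F : ℝ → ℝ} {a z : ℝ} (haz : a ≤ z)
    (hF : ContinuousOn F (Icc a z)) : ContinuousOn (fun y => ∫ l in y..z, F l) (Icc a z) := by
  have := continuousOn_primitive_interval_left (μ := volume)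
    (by rw [uIcc_of_le haz]; exact hF.integrableOn_Icc : IntegrableOn F (uIcc a z))
  rwa [uIcc_of_le haz] at this

lemma integral_exp_integral_le {F : ℝ → ℝ} {A ε z : ℝ} (hA : 0 ≤ A) (hε : 0 < ε)
    (hεz : 2 * ε ≤ z) (hF : ContinuousOn F (Icc ε z)) (hle : ∀ l ∈ Icc ε z, F l ≤ ε * A / l ^ 2) :
    ∫ y in ε..2 * ε, exp (∫ l in y..z, F l) ≤ exp A * ε := by
  have hbound : ∀ y ∈ uIoc ε (2 * ε), ‖exp (∫ l in y..z, F l)‖ ≤ exp A := by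
    intro y hy
    rw [uIoc_of_le (by linarith)] at hy
    rw [norm_of_nonneg (exp_pos _).le, exp_le_exp]
    calc ∫ l in y..z, F l ≤ ε * A / y :=
          integral_le_div_of_le_div_sq (by positivity) (hε.trans hy.1) (by linarith [hy.2])
            (hF.mono (Icc_subset_Icc hy.1.le le_rfl)).integrableOn_Icc
            fun l hl => hle l ⟨hy.1.le.trans hl.1.le, hl.2.le⟩
      _ ≤ ε * A / ε := by gcongr; exact hy.1.le
      _ = A := by field_simp
  calc ∫ y in ε..2 * ε, exp (∫ l in y..z, F l)
      ≤ ‖∫ y in ε..2 * ε, exp (∫ l in y..z, F l)‖ := le_norm_self _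
    _ ≤ exp A * |2 * ε - ε| := norm_integral_le_of_norm_le_const hbound
    _ = exp A * ε := by rw [abs_of_pos (by linarith)]; ring

lemma le_integral_exp_integral {F H : ℝ → ℝ} {a w z : ℝ} (haw : a ≤ w) (hwz : w ≤ z)
    (hF : ContinuousOn F (Icc a z)) (hH : ContinuousOn H (Icc w z))
    (hH0 : ∀ l ∈ Icc w z, 0 ≤ H l) (hle : ∀ l ∈ Icc w z, -H l ≤ F l) :
    (z - w) * exp (-∫ l in w..z, H l) ≤ ∫ y in a..z, exp (∫ l in y..z, F l) := by
  have hexp : ∀ y ∈ Icc w z, exp (-∫ l in w..z, H l) ≤ exp (∫ l in y..z, F l) := by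
    intro y hy
    have hFy : ContinuousOn F (Icc y z) := hF.mono (Icc_subset_Icc (haw.trans hy.1) le_rfl)
    have hHy : ContinuousOn H (Icc y z) := hH.mono (Icc_subset_Icc hy.1 le_rfl)
    rw [exp_le_exp]
    calc -∫ l in w..z, H l ≤ -∫ l in y..z, H l :=
          neg_le_neg <| integral_mono_interval hy.1 hy.2 le_rfl
            ((ae_restrict_iff' measurableSet_Ioc).2 <|
              Eventually.of_forall fun l hl => hH0 l (Ioc_subset_Icc_self hl))
            (hH.intervalIntegrable_of_Icc hwz)
      _ = ∫ l in y..z, -H l := intervalIntegral.integral_neg.symm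
      _ ≤ ∫ l in y..z, F l :=
          integral_mono_on hy.2 (hHy.neg.intervalIntegrable_of_Icc hy.2)
            (hFy.intervalIntegrable_of_Icc hy.2) fun l hl => hle l ⟨hy.1.trans hl.1, hl.2⟩
  have hg : ContinuousOn (fun y => exp (∫ l in y..z, F l)) (Icc a z) :=
    continuous_exp.comp_continuousOn (continuousOn_integral_left (haw.trans hwz) hF)
  calc (z - w) * exp (-∫ l in w..z, H l) = ∫ _ in w..z, exp (-∫ l in w..z, H l) := by
        rw [intervalIntegral.integral_const, smul_eq_mul]
    _ ≤ ∫ y in w..z, exp (∫ l in y..z, F l) :=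
        integral_mono_on hwz intervalIntegrable_const
          ((hg.mono (Icc_subset_Icc haw le_rfl)).intervalIntegrable_of_Icc hwz) hexp
    _ ≤ ∫ y in a..z, exp (∫ l in y..z, F l) :=
        integral_mono_interval haw hwz le_rfl
          (Eventually.of_forall fun y => (exp_pos _).le) (hg.intervalIntegrable_of_Icc (haw.trans hwz))

lemma tendsto_div_nhdsGT_zero_of_le {N Q : ℝ → ℝ} {C D : ℝ} (hD : 0 < D)
    (hN : ∀ᶠ ε in 𝓝[>] 0, 0 ≤ N ε ∧ N ε ≤ C * ε) (hQ : ∀ᶠ ε in 𝓝[>] 0, D ≤ Q ε) :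
    Tendsto (fun ε => N ε / Q ε) (𝓝[>] 0) (𝓝 0) := by
  have hlim : Tendsto (fun ε => C / D * ε) (𝓝[>] 0) (𝓝 0) := by
    simpa using (((continuous_const_mul (C / D)).tendsto 0).mono_left nhdsWithin_le_nhds)
  refine squeeze_zero' ?_ ?_ hlim
  · filter_upwards [hN, hQ] with ε hNε hQε
    exact div_nonneg hNε.1 (hD.le.trans hQε)
  · filter_upwards [hN, hQ] with ε hNε hQε
    calc N ε / Q ε ≤ C * ε / D := div_le_div₀ (hNε.1.trans hNε.2) hNε.2 hD hQε
      _ = C / D * ε := by ring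

lemma continuousOn_div_sq {f σ : ℝ → ℝ} {t z : ℝ} (hf : ContinuousOn f (Ici 0))
    (hσ : ContinuousOn σ (Ici 0)) (hσpos : ∀ x, 0 < x → 0 < σ x) (ht : 0 < t) :
    ContinuousOn (fun l => f l / σ l ^ 2) (Icc t z) :=
  have hsub : Icc t z ⊆ Ici 0 := fun _ hl => ht.le.trans hl.1
  (hf.mono hsub).div ((hσ.mono hsub).pow 2) fun l hl => (pow_pos (hσpos l (ht.trans_le hl.1)) 2).ne'

lemma sub_div_sq_le {ε u v M s c l : ℝ} (hε : 0 ≤ ε) (hM : 0 ≤ M) (hu : u ≤ M) (hv : 0 ≤ v)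
    (hc : 0 < c) (hl : 0 < l) (hs : c * l ≤ s) :
    (ε * u - v) / s ^ 2 ≤ ε * (M / c ^ 2) / l ^ 2 :=
  calc (ε * u - v) / s ^ 2 ≤ ε * M / s ^ 2 := by gcongr; nlinarith
    _ ≤ ε * M / (c * l) ^ 2 := by gcongr
    _ = ε * (M / c ^ 2) / l ^ 2 := by field_simp

theorem statement1_general
    (b1 b2 σ : ℝ → ℝ)
    (hb1 : ContDiffOn ℝ 1 b1 (Ici 0))
    (hb1inf : ∃ m > 0, ∀ x ∈ Ici (0 : ℝ), m ≤ b1 x)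
    (hb1sup : ∃ M : ℝ, ∀ x ∈ Ici (0 : ℝ), b1 x ≤ M)
    (hb2 : ContDiffOn ℝ 2 b2 (Ici 0))
    (hb2nonneg : ∀ x ∈ Ici (0 : ℝ), 0 ≤ b2 x)
    (hσ : ContDiffOn ℝ 2 σ (Ici 0))
    (hσnonneg : ∀ x ∈ Ici (0 : ℝ), 0 ≤ σ x)
    (hσzero : ∀ x ∈ Ici (0 : ℝ), (σ x = 0 ↔ x = 0))
    (hσ' : 0 < derivWithin σ (Ici 0) 0)
    (z : ℝ) (hz : 0 < z) :
    Tendsto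
      (fun ε : ℝ =>
        (∫ y in ε..(2 * ε), Real.exp (∫ l in y..z, (ε * b1 l - b2 l) / σ l ^ 2)) /
          (∫ y in ε..z, Real.exp (∫ l in y..z, (ε * b1 l - b2 l) / σ l ^ 2)))
      (𝓝[>] (0 : ℝ)) (𝓝 0) := by
  obtain ⟨m, hm, hmb⟩ := hb1inf
  obtain ⟨M, hMb⟩ := hb1sup
  have hM : 0 ≤ M := hm.le.trans ((hmb 0 self_mem_Ici).trans (hMb 0 self_mem_Ici))
  have hσpos : ∀ x, 0 < x → 0 < σ x := fun x hx =>
    (hσnonneg x hx.le).lt_of_ne' fun h => hx.ne' ((hσzero x hx.le).1 h)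
  obtain ⟨c, hc, hcσ⟩ := exists_pos_mul_le_of_hasDerivWithinAt
    (hσ.continuousOn.mono Icc_subset_Ici_self) ((hσzero 0 self_mem_Ici).2 rfl)
    (hσ.differentiableOn two_ne_zero 0 self_mem_Ici).hasDerivWithinAt hσ'
    (fun x hx => hσpos x hx.1) hz.le
  have hcont : ∀ ε {t}, 0 < t → ContinuousOn (fun l => (ε * b1 l - b2 l) / σ l ^ 2) (Icc t z) :=
    fun ε _ => continuousOn_div_sq ((continuousOn_const.mul hb1.continuousOn).sub
      hb2.continuousOn) hσ.continuousOn hσpos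
  have hz2 : 0 < z / 2 := half_pos hz
  set D := (z - z / 2) * exp (-∫ l in (z / 2)..z, b2 l / σ l ^ 2)
  refine tendsto_div_nhdsGT_zero_of_le (C := exp (M / c ^ 2)) (D := D)
    (mul_pos (by linarith) (exp_pos _)) ?_ ?_
  · filter_upwards [Ioo_mem_nhdsGT hz2] with ε ⟨hε, hεz⟩
    refine ⟨integral_nonneg (by linarith) fun _ _ => (exp_pos _).le, ?_⟩
    exact integral_exp_integral_le (by positivity) hε (by linarith) (hcont ε hε) fun l hl =>
      sub_div_sq_le hε.le hM (hMb l (hε.trans_le hl.1).le) (hb2nonneg l (hε.trans_le hl.1).le) hc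
        (hε.trans_le hl.1) (hcσ l ⟨(hε.trans_le hl.1).le, hl.2⟩)
  · filter_upwards [Ioo_mem_nhdsGT hz2] with ε ⟨hε, hεz⟩
    refine le_integral_exp_integral hεz.le (by linarith) (hcont ε hε)
      (continuousOn_div_sq hb2.continuousOn hσ.continuousOn hσpos hz2)
      (fun l hl => div_nonneg (hb2nonneg l (hz2.le.trans hl.1)) (sq_nonneg _)) fun l hl => ?_
    rw [← neg_div]
    gcongr
    nlinarith [hmb l (hz2.le.trans hl.1)]

/-- (Vanishing of the upcrossing probability `p_{ε,z}`.) For every `z > 0` one has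
`lim_{ε→0⁺} (∫_ε^{2ε} g_ε(y) dy) / (∫_ε^{z} g_ε(y) dy) = 0`, where
`g_ε(y) = exp(∫_y^z (ε·b₁(l) − b₂(l))/σ(l)² dl)`. -/
theorem statement1
    (b1 b2 σ : ℝ → ℝ)
    (hb1 : ContDiffOn ℝ 1 b1 (Ici 0))
    (hb1inf : ∃ m > 0, ∀ x ∈ Ici (0 : ℝ), m ≤ b1 x)
    (hb1sup : ∃ M : ℝ, ∀ x ∈ Ici (0 : ℝ), b1 x ≤ M)
    (hb2 : ContDiffOn ℝ 2 b2 (Ici 0))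
    (hb2nonneg : ∀ x ∈ Ici (0 : ℝ), 0 ≤ b2 x)
    (hb20 : b2 0 = 0)
    (hb2' : 0 < derivWithin b2 (Ici 0) 0)
    (hσ : ContDiffOn ℝ 2 σ (Ici 0))
    (hσnonneg : ∀ x ∈ Ici (0 : ℝ), 0 ≤ σ x)
    (hσzero : ∀ x ∈ Ici (0 : ℝ), (σ x = 0 ↔ x = 0))
    (hσ' : 0 < derivWithin σ (Ici 0) 0)
    (z : ℝ) (hz : 0 < z) :
    Tendsto
      (fun ε : ℝ =>
        (∫ y in ε..(2 * ε), Real.exp (∫ l in y..z, (ε * b1 l - b2 l) / σ l ^ 2)) /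
          (∫ y in ε..z, Real.exp (∫ l in y..z, (ε * b1 l - b2 l) / σ l ^ 2)))
      (𝓝[>] (0 : ℝ)) (𝓝 0) :=
  statement1_general b1 b2 σ hb1 hb1inf hb1sup hb2 hb2nonneg hσ hσnonneg hσzero hσ' z hz
end

section
/- (Pointwise limit of the rescaled Green density, Lemma 4.3 part c).) For all fixed w > 0 and y > 0 one has lim_{ε→0⁺} (ε² / σ(yε)²) · exp( ∫_{wε}^{yε} (ε·b₁(l) − b₂(l))/σ(l)² dl ) = (1/s²) · e^{(a/s²)(1/w − 1/y)} · w^{b/s²} / y^{b/s² + 2}. -/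
open MeasureTheory Real Set Filter
open scoped Topology

/-!
After the substitution `l = u ε` the exponent becomes `∫_w^y ε (ε b₁(uε) − b₂(uε)) / σ(uε)² du`.
Since `b₁(v) → a`, `b₂(v) ~ b v` and `σ(v) ~ s v` as `v → 0⁺`, the integrand converges to
`a / (s u)² − b / (s² u)` and, for small `ε`, is bounded uniformly in `u ∈ [w, y]`; so by dominated
convergence the exponent tends to `(a / s²)(1/w − 1/y) − (b / s²) log (y / w)`. The prefactor
`ε² / σ(yε)²` tends to `1 / (s y)²`.
-/

theorem tendsto_const_mul_nhdsGT_zero {u : ℝ} (hu : 0 < u) :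
    Tendsto (fun ε => u * ε) (𝓝[>] 0) (𝓝[>] 0) := by
  simpa using Filter.TendstoNhdsWithinIoi.const_mul hu (tendsto_id (x := 𝓝[>] (0 : ℝ)))

theorem HasDerivWithinAt.tendsto_div_nhdsGT_zero {f : ℝ → ℝ} {f' : ℝ}
    (hf : HasDerivWithinAt f f' (Ici 0) 0) (h0 : f 0 = 0) :
    Tendsto (fun x => f x / x) (𝓝[>] 0) (𝓝 f') := by
  refine ((hasDerivWithinAt_iff_tendsto_slope' (lt_irrefl 0)).1 hf.Ioi_of_Ici).congr fun x => ?_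
  simp [slope_def_field, h0]

theorem eventually_nhdsGT_zero_forall_mul {p : ℝ → Prop} (hp : ∀ᶠ v in 𝓝[>] 0, p v)
    {T : ℝ} (hT : 0 < T) : ∀ᶠ ε in 𝓝[>] 0, ∀ u ∈ Ioc 0 T, p (u * ε) := by
  obtain ⟨δ, hδ, hsub⟩ := mem_nhdsGT_iff_exists_Ioo_subset.1 hp
  filter_upwards [Ioo_mem_nhdsGT (div_pos hδ hT)] with ε hε u hu
  refine hsub ⟨mul_pos hu.1 hε.1, ?_⟩
  calc u * ε ≤ T * ε := by gcongr; exacts [hε.1.le, hu.2]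
    _ < T * (δ / T) := by gcongr; exact hε.2
    _ = δ := by field_simp

theorem tendsto_integral_mul_comp_mul_nhdsGT {φ f : ℝ → ℝ} {L w y : ℝ} (hw : 0 < w) (hy : 0 < y)
    (hφ : ContinuousOn φ (uIcc w y)) (hf : ContinuousOn f (Ioi 0))
    (hlim : Tendsto f (𝓝[>] 0) (𝓝 L)) :
    Tendsto (fun ε => ∫ u in w..y, φ u * f (u * ε)) (𝓝[>] 0) (𝓝 (∫ u in w..y, φ u * L)) := by
  have hpos : ∀ u ∈ uIcc w y, 0 < u := fun u hu => (lt_min hw hy).trans_le hu.1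
  have hbound : ∀ᶠ ε in 𝓝[>] 0, ∀ u ∈ Ioc 0 (max w y), ‖f (u * ε)‖ ≤ ‖L‖ + 1 :=
    eventually_nhdsGT_zero_forall_mul
      (hlim.norm.eventually (eventually_le_nhds (lt_add_one _))) (lt_max_of_lt_left hw)
  refine intervalIntegral.tendsto_integral_filter_of_dominated_convergence
    (fun u => ‖φ u‖ * (‖L‖ + 1)) ?_ ?_ (hφ.intervalIntegrable.norm.mul_const _) ?_
  · filter_upwards [self_mem_nhdsWithin] with ε (hε : 0 < ε)
    have hcont : ContinuousOn (fun u => φ u * f (u * ε)) (uIcc w y) :=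
      hφ.mul (hf.comp (by fun_prop) fun u hu => mul_pos (hpos u hu) hε)
    exact hcont.intervalIntegrable.def'.aestronglyMeasurable
  · filter_upwards [hbound] with ε hε
    refine ae_of_all _ fun u hu => ?_
    rw [norm_mul]
    exact mul_le_mul_of_nonneg_left
      (hε u ⟨hpos u (uIoc_subset_uIcc hu), (uIoc_subset_uIcc hu).2⟩) (norm_nonneg _)
  · exact ae_of_all _ fun u hu =>
      (hlim.comp (tendsto_const_mul_nhdsGT_zero (hpos u (uIoc_subset_uIcc hu)))).const_mul _

theorem tendsto_pow_mul_integral_mul_nhdsGT (n : ℕ) {h : ℝ → ℝ} {L w y : ℝ} (hw : 0 < w)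
    (hy : 0 < y) (hh : ContinuousOn h (Ioi 0))
    (hlim : Tendsto (fun v => v ^ (n + 1) * h v) (𝓝[>] 0) (𝓝 L)) :
    Tendsto (fun ε => ε ^ n * ∫ l in (w * ε)..(y * ε), h l) (𝓝[>] 0)
      (𝓝 ((∫ u in w..y, (u ^ (n + 1))⁻¹) * L)) := by
  have hpos : ∀ u ∈ uIcc w y, 0 < u := fun u hu => (lt_min hw hy).trans_le hu.1
  have hlim' := tendsto_integral_mul_comp_mul_nhdsGT (φ := fun u => (u ^ (n + 1))⁻¹)
    (f := fun v => v ^ (n + 1) * h v) hw hy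
    (continuousOn_id.pow _ |>.inv₀ fun u hu => (pow_pos (hpos u hu) _).ne')
    ((continuousOn_id.pow _).mul hh) hlim
  rw [intervalIntegral.integral_mul_const] at hlim'
  refine hlim'.congr' ?_
  filter_upwards [self_mem_nhdsWithin] with ε (hε : 0 < ε)
  rw [← intervalIntegral.smul_integral_comp_mul_right, smul_eq_mul, ← mul_assoc, ← pow_succ,
    ← intervalIntegral.integral_const_mul]
  refine intervalIntegral.integral_congr fun u hu => ?_
  have := (hpos u hu).ne'
  rw [mul_pow]
  field_simp

theorem integral_inv_sq_of_pos {w y : ℝ} (hw : 0 < w) (hy : 0 < y) :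
    ∫ u in w..y, (u ^ 2)⁻¹ = 1 / w - 1 / y := by
  have h0 : (0 : ℝ) ∉ uIcc w y := fun h => (lt_min hw hy).not_ge h.1
  have := integral_zpow (a := w) (b := y) (n := -2) (Or.inr ⟨by norm_num, h0⟩)
  simp only [zpow_neg, zpow_ofNat] at this
  rw [this]
  norm_num
  ring

theorem tendsto_integral_drift_div_sq_nhdsGT {b1 b2 σ : ℝ → ℝ} {a b s w y : ℝ}
    (hb1 : ContinuousOn b1 (Ioi 0)) (hb2 : ContinuousOn b2 (Ioi 0))
    (hσ : ContinuousOn σ (Ioi 0)) (hσne : ∀ x ∈ Ioi 0, σ x ≠ 0)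
    (hb1lim : Tendsto b1 (𝓝[>] 0) (𝓝 a)) (hb2lim : Tendsto (fun x => b2 x / x) (𝓝[>] 0) (𝓝 b))
    (hσlim : Tendsto (fun x => σ x / x) (𝓝[>] 0) (𝓝 s)) (hs : s ≠ 0) (hw : 0 < w) (hy : 0 < y) :
    Tendsto (fun ε => ∫ l in (w * ε)..(y * ε), (ε * b1 l - b2 l) / σ l ^ 2) (𝓝[>] 0)
      (𝓝 (a / s ^ 2 * (1 / w - 1 / y) - b / s ^ 2 * log (y / w))) := by
  have hσsq_ne : ∀ x ∈ Ioi (0 : ℝ), σ x ^ 2 ≠ 0 := fun x hx => pow_ne_zero 2 (hσne x hx)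
  have hcont1 : ContinuousOn (fun l => b1 l / σ l ^ 2) (Ioi 0) := hb1.div (hσ.pow 2) hσsq_ne
  have hcont2 : ContinuousOn (fun l => b2 l / σ l ^ 2) (Ioi 0) := hb2.div (hσ.pow 2) hσsq_ne
  have hlim1 := tendsto_pow_mul_integral_mul_nhdsGT 1 hw hy hcont1
    ((hb1lim.div (hσlim.pow 2) (pow_ne_zero 2 hs)).congr' <| by
      filter_upwards [self_mem_nhdsWithin] with x (hx : 0 < x)
      have := hσne x hx
      simp only [Pi.div_apply, div_pow]
      field_simp)
  have hlim2 := tendsto_pow_mul_integral_mul_nhdsGT 0 hw hy hcont2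
    ((hb2lim.div (hσlim.pow 2) (pow_ne_zero 2 hs)).congr' <| by
      filter_upwards [self_mem_nhdsWithin] with x (hx : 0 < x)
      have := hσne x hx
      simp only [Pi.div_apply, div_pow]
      field_simp
      ring)
  simp only [one_add_one_eq_two, integral_inv_sq_of_pos hw hy, zero_add, pow_one, pow_zero,
    one_mul, integral_inv_of_pos hw hy] at hlim1 hlim2
  rw [mul_comm (a / s ^ 2), mul_comm (b / s ^ 2)]
  refine (hlim1.sub hlim2).congr' ?_
  filter_upwards [self_mem_nhdsWithin] with ε (hε : 0 < ε)
  have hsub : uIcc (w * ε) (y * ε) ⊆ Ioi 0 := fun l hl =>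
    (lt_min (mul_pos hw hε) (mul_pos hy hε)).trans_le hl.1
  rw [← intervalIntegral.integral_const_mul, ← intervalIntegral.integral_sub
    ((hcont1.mono hsub).intervalIntegrable.const_mul ε) (hcont2.mono hsub).intervalIntegrable]
  simp only [sub_div, mul_div_assoc]

theorem tendsto_sq_div_sq_comp_mul_nhdsGT {σ : ℝ → ℝ} {s y : ℝ}
    (hσlim : Tendsto (fun x => σ x / x) (𝓝[>] 0) (𝓝 s)) (hs : s ≠ 0) (hy : 0 < y) :
    Tendsto (fun ε => ε ^ 2 / σ (y * ε) ^ 2) (𝓝[>] 0) (𝓝 (s ^ 2 * y ^ 2)⁻¹) := by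
  refine ((((hσlim.comp (tendsto_const_mul_nhdsGT_zero hy)).pow 2).mul_const (y ^ 2)).inv₀
    (by positivity)).congr' ?_
  filter_upwards [self_mem_nhdsWithin] with ε (hε : 0 < ε)
  rw [Function.comp_apply, div_pow, mul_pow, ← inv_div]
  field_simp

theorem inv_sq_mul_exp_sub_mul_log_div {w y : ℝ} (hw : 0 < w) (hy : 0 < y) (s A c : ℝ) :
    (s ^ 2 * y ^ 2)⁻¹ * exp (A - c * log (y / w)) = 1 / s ^ 2 * exp A * w ^ c / y ^ (c + 2) := by
  rw [exp_sub, mul_comm c, ← rpow_def_of_pos (div_pos hy hw), div_rpow hy.le hw.le,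
    rpow_add hy, rpow_two]
  field_simp

theorem statement3_general
    (b1 b2 σ : ℝ → ℝ)
    (hb1 : ContDiffOn ℝ 1 b1 (Ici 0))
    (hb2 : ContDiffOn ℝ 2 b2 (Ici 0))
    (hb20 : b2 0 = 0)
    (hσ : ContDiffOn ℝ 2 σ (Ici 0))
    (hσzero : ∀ x ∈ Ici (0 : ℝ), (σ x = 0 ↔ x = 0))
    (a b s : ℝ)
    (ha : a = b1 0)
    (hb : b = derivWithin b2 (Ici 0) 0)
    (hs : s = derivWithin σ (Ici 0) 0) (hspos : 0 < s)
    (w y : ℝ) (hw : 0 < w) (hy : 0 < y) :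
    Tendsto
      (fun ε : ℝ =>
        ε ^ 2 / σ (y * ε) ^ 2 *
          Real.exp (∫ l in (w * ε)..(y * ε), (ε * b1 l - b2 l) / σ l ^ 2))
      (𝓝[>] (0 : ℝ))
      (𝓝 (1 / s ^ 2 * Real.exp (a / s ^ 2 * (1 / w - 1 / y)) *
        w ^ (b / s ^ 2) / y ^ (b / s ^ 2 + 2))) := by
  have hσne : ∀ x ∈ Ioi (0 : ℝ), σ x ≠ 0 := fun x (hx : 0 < x) h => hx.ne' ((hσzero x hx.le).1 h)
  have hσlim : Tendsto (fun x => σ x / x) (𝓝[>] 0) (𝓝 s) :=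
    hs ▸ (hσ.differentiableOn two_ne_zero 0 self_mem_Ici).hasDerivWithinAt
      |>.tendsto_div_nhdsGT_zero ((hσzero 0 self_mem_Ici).2 rfl)
  have hb2lim : Tendsto (fun x => b2 x / x) (𝓝[>] 0) (𝓝 b) :=
    hb ▸ (hb2.differentiableOn two_ne_zero 0 self_mem_Ici).hasDerivWithinAt
      |>.tendsto_div_nhdsGT_zero hb20
  have hb1lim : Tendsto b1 (𝓝[>] 0) (𝓝 a) :=
    ha ▸ (hb1.continuousOn 0 self_mem_Ici).mono Ioi_subset_Ici_self
  have hexponent := tendsto_integral_drift_div_sq_nhdsGT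
    (hb1.continuousOn.mono Ioi_subset_Ici_self) (hb2.continuousOn.mono Ioi_subset_Ici_self)
    (hσ.continuousOn.mono Ioi_subset_Ici_self) hσne hb1lim hb2lim hσlim hspos.ne' hw hy
  rw [← inv_sq_mul_exp_sub_mul_log_div hw hy]
  exact (tendsto_sq_div_sq_comp_mul_nhdsGT hσlim hspos.ne' hy).mul
    ((continuous_exp.tendsto _).comp hexponent)

/-- (Pointwise limit of the rescaled Green density, Lemma 4.3 part c).) For all fixed
`w > 0` and `y > 0`:
`lim_{ε→0⁺} (ε²/σ(yε)²)·exp(∫_{wε}^{yε} (ε·b₁(l) − b₂(l))/σ(l)² dl)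
  = (1/s²)·e^{(a/s²)(1/w − 1/y)}·w^{b/s²}/y^{b/s²+2}`. -/
theorem statement3
    (b1 b2 σ : ℝ → ℝ)
    (hb1 : ContDiffOn ℝ 1 b1 (Ici 0))
    (hb1inf : ∃ m > 0, ∀ x ∈ Ici (0 : ℝ), m ≤ b1 x)
    (hb1sup : ∃ M : ℝ, ∀ x ∈ Ici (0 : ℝ), b1 x ≤ M)
    (hb2 : ContDiffOn ℝ 2 b2 (Ici 0))
    (hb2nonneg : ∀ x ∈ Ici (0 : ℝ), 0 ≤ b2 x)
    (hb20 : b2 0 = 0)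
    (hσ : ContDiffOn ℝ 2 σ (Ici 0))
    (hσnonneg : ∀ x ∈ Ici (0 : ℝ), 0 ≤ σ x)
    (hσzero : ∀ x ∈ Ici (0 : ℝ), (σ x = 0 ↔ x = 0))
    (a b s : ℝ)
    (ha : a = b1 0)
    (hb : b = derivWithin b2 (Ici 0) 0) (hbpos : 0 < b)
    (hs : s = derivWithin σ (Ici 0) 0) (hspos : 0 < s)
    (w y : ℝ) (hw : 0 < w) (hy : 0 < y) :
    Tendsto
      (fun ε : ℝ =>
        ε ^ 2 / σ (y * ε) ^ 2 *
          Real.exp (∫ l in (w * ε)..(y * ε), (ε * b1 l - b2 l) / σ l ^ 2))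
      (𝓝[>] (0 : ℝ))
      (𝓝 (1 / s ^ 2 * Real.exp (a / s ^ 2 * (1 / w - 1 / y)) *
        w ^ (b / s ^ 2) / y ^ (b / s ^ 2 + 2))) :=
  statement3_general b1 b2 σ hb1 hb2 hb20 hσ hσzero a b s ha hb hs hspos w y hw hy
end

section
/- (L'Hôpital limit used for integrability of the majorant.) Let a, s, β > 0 and c ∈ ℝ be constants. Then lim_{y→0⁺} ( ∫_y^β e^{a/(s²·w)}·w^c dw ) / ( e^{a/(s²·y)}·y^{c+2} ) = s²/a. In particular this holds for c = b/s² + (a+s²)/(2βs²) with b > 0. -/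
open MeasureTheory Real Set Filter
open scoped Topology

/-!
An `∞/∞` form of L'Hôpital's rule at `0⁺`: by Cauchy's mean value theorem on `[x, b]`,
`f x / g x = f' ξ / g' ξ * (1 - g b / g x) + f b / g x` for some `ξ ∈ (x, b)`, and the last two
corrections vanish as `g x → ∞`. Here the numerator `∫_y^β exp (k / w) * w ^ c dw` has derivative
`-exp (k / y) * y ^ c`, while `exp (k / y) * y ^ (c + 2)` has derivative
`-exp (k / y) * y ^ c * (k - (c + 2) * y)`, so the ratio of derivatives is
`(k - (c + 2) * y)⁻¹ → k⁻¹`, with `k = a / s ^ 2`.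
-/

section LHopitalAtTop

variable {a l : ℝ} {f f' g g' : ℝ → ℝ}

lemma exists_mem_Ioo_div_eq_of_hasDerivAt {x b : ℝ} (hxb : x < b)
    (hff' : ∀ y ∈ Icc x b, HasDerivAt f (f' y) y) (hgg' : ∀ y ∈ Icc x b, HasDerivAt g (g' y) y)
    (hg' : ∀ y ∈ Ioo x b, g' y ≠ 0) (hgx : g x ≠ 0) :
    ∃ ξ ∈ Ioo x b, f x / g x = f' ξ / g' ξ * (1 - g b / g x) + f b / g x := by
  obtain ⟨ξ, hξ, hslope⟩ := exists_ratio_hasDerivAt_eq_ratio_slope f f' hxb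
    (fun y hy => (hff' y hy).continuousAt.continuousWithinAt)
    (fun y hy => hff' y (Ioo_subset_Icc_self hy)) g g'
    (fun y hy => (hgg' y hy).continuousAt.continuousWithinAt)
    (fun y hy => hgg' y (Ioo_subset_Icc_self hy))
  refine ⟨ξ, hξ, ?_⟩
  have hg'ξ := hg' ξ hξ
  field_simp
  linarith

lemma eventually_div_lt_of_lhopital_atTop_nhdsGT {l' : ℝ}
    (hff' : ∀ᶠ x in 𝓝[>] a, HasDerivAt f (f' x) x)
    (hgg' : ∀ᶠ x in 𝓝[>] a, HasDerivAt g (g' x) x) (hg' : ∀ᶠ x in 𝓝[>] a, g' x ≠ 0)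
    (hg : Tendsto g (𝓝[>] a) atTop) (hdiv : Tendsto (fun x => f' x / g' x) (𝓝[>] a) (𝓝 l))
    (hll' : l < l') :
    ∀ᶠ x in 𝓝[>] a, f x / g x < l' := by
  obtain ⟨m, hlm, hml'⟩ := exists_between hll'
  obtain ⟨δ, hδ, hgood⟩ := mem_nhdsGT_iff_exists_Ioo_subset.1
    (hff'.and (hgg'.and (hg'.and (hdiv.eventually (gt_mem_nhds hlm)))))
  obtain ⟨b, hab, hbδ⟩ := exists_between (mem_Ioi.1 hδ)
  have hgood_Icc : ∀ x ∈ Ioi a, ∀ y ∈ Icc x b, _ := fun x hx y hy =>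
    hgood ⟨lt_of_lt_of_le hx hy.1, lt_of_le_of_lt hy.2 hbδ⟩
  have hsmall : ∀ C, Tendsto (fun x => C / g x) (𝓝[>] a) (𝓝 0) := fun C =>
    tendsto_const_nhds.div_atTop hg
  have hbound : Tendsto (fun x => m * (1 - g b / g x) + f b / g x) (𝓝[>] a) (𝓝 m) := by
    simpa using ((hsmall (g b)).const_sub 1 |>.const_mul m).add (hsmall (f b))
  filter_upwards [self_mem_nhdsWithin, Ioo_mem_nhdsGT hab, hg.eventually_gt_atTop 0,
    (hsmall (g b)).eventually (gt_mem_nhds one_pos), hbound.eventually (gt_mem_nhds hml')]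
    with x hax hxb hgx hgbx hlt
  obtain ⟨ξ, hξ, hslope⟩ := exists_mem_Ioo_div_eq_of_hasDerivAt hxb.2
    (fun y hy => (hgood_Icc x hax y hy).1) (fun y hy => (hgood_Icc x hax y hy).2.1)
    (fun y hy => (hgood_Icc x hax y (Ioo_subset_Icc_self hy)).2.2.1) hgx.ne'
  have hratio : f' ξ / g' ξ < m := (hgood_Icc x hax ξ (Ioo_subset_Icc_self hξ)).2.2.2
  have hfactor : 0 < 1 - g b / g x := by linarith
  calc f x / g x = f' ξ / g' ξ * (1 - g b / g x) + f b / g x := hslope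
    _ < m * (1 - g b / g x) + f b / g x := by gcongr
    _ < l' := hlt

theorem lhopital_atTop_nhdsGT
    (hff' : ∀ᶠ x in 𝓝[>] a, HasDerivAt f (f' x) x)
    (hgg' : ∀ᶠ x in 𝓝[>] a, HasDerivAt g (g' x) x) (hg' : ∀ᶠ x in 𝓝[>] a, g' x ≠ 0)
    (hg : Tendsto g (𝓝[>] a) atTop) (hdiv : Tendsto (fun x => f' x / g' x) (𝓝[>] a) (𝓝 l)) :
    Tendsto (fun x => f x / g x) (𝓝[>] a) (𝓝 l) := by
  refine tendsto_order.2 ⟨fun l' hl' => ?_, fun l' hl' =>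
    eventually_div_lt_of_lhopital_atTop_nhdsGT hff' hgg' hg' hg hdiv hl'⟩
  have hneg := eventually_div_lt_of_lhopital_atTop_nhdsGT (f := fun x => -f x)
    (f' := fun x => -f' x) (hff'.mono fun x hx => hx.neg) hgg' hg' hg
    (by simpa only [neg_div] using hdiv.neg) (neg_lt_neg hl')
  filter_upwards [hneg] with x hx
  rw [neg_div] at hx
  linarith

end LHopitalAtTop

lemma tendsto_exp_div_mul_rpow_nhdsGT_zero {k : ℝ} (hk : 0 < k) (p : ℝ) :
    Tendsto (fun y => exp (k / y) * y ^ p) (𝓝[>] 0) atTop := by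
  refine ((tendsto_exp_mul_div_rpow_atTop p k hk).comp tendsto_inv_nhdsGT_zero).congr' ?_
  filter_upwards [self_mem_nhdsWithin] with y (hy : 0 < y)
  simp [Real.inv_rpow hy.le, div_eq_mul_inv]

lemma hasDerivAt_exp_div_mul_rpow (k c : ℝ) {w : ℝ} (hw : 0 < w) :
    HasDerivAt (fun w => exp (k / w) * w ^ (c + 2))
      (-(exp (k / w) * w ^ c * (k - (c + 2) * w))) w := by
  have hexp : HasDerivAt (fun x => exp (k / x)) (exp (k / w) * -(k / w ^ 2)) w := by
    simpa [div_eq_mul_inv] using ((hasDerivAt_inv hw.ne').const_mul k).exp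
  refine (hexp.mul (Real.hasDerivAt_rpow_const (p := c + 2) (Or.inl hw.ne'))).congr_deriv ?_
  rw [show c + 2 - 1 = c + 1 by ring, Real.rpow_add hw, Real.rpow_two, Real.rpow_add_one hw.ne']
  field_simp
  ring

theorem tendsto_integral_exp_div_mul_rpow_div {k : ℝ} (hk : 0 < k) (c β : ℝ) (hβ : 0 < β) :
    Tendsto (fun y => (∫ w in y..β, exp (k / w) * w ^ c) / (exp (k / y) * y ^ (c + 2)))
      (𝓝[>] 0) (𝓝 k⁻¹) := by
  set F := fun w : ℝ => exp (k / w) * w ^ c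
  have hF : ContinuousOn F (Ioi 0) := by
    refine ContinuousOn.mul ?_ (continuousOn_id.rpow_const fun w hw => Or.inl (ne_of_gt hw))
    exact continuous_exp.comp_continuousOn (continuousOn_const.div continuousOn_id
      fun w hw => ne_of_gt hw)
  have hpos : ∀ᶠ y in 𝓝[>] (0 : ℝ), 0 < y := self_mem_nhdsWithin
  have hlin : Tendsto (fun y : ℝ => k - (c + 2) * y) (𝓝[>] 0) (𝓝 k) := by
    have hcont : Continuous fun y : ℝ => k - (c + 2) * y := by fun_prop
    simpa using (hcont.tendsto 0).mono_left nhdsWithin_le_nhds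
  have hlin_pos : ∀ᶠ y in 𝓝[>] (0 : ℝ), 0 < k - (c + 2) * y := hlin.eventually (lt_mem_nhds hk)
  refine lhopital_atTop_nhdsGT (f' := fun y => -F y)
    (g' := fun y => -(F y * (k - (c + 2) * y))) ?_ ?_ ?_
    (tendsto_exp_div_mul_rpow_nhdsGT_zero hk (c + 2)) ?_
  · filter_upwards [hpos] with y hy
    have hsub : uIcc y β ⊆ Ioi 0 := fun w hw => lt_of_lt_of_le (lt_min hy hβ) hw.1
    exact intervalIntegral.integral_hasDerivAt_left ((hF.mono hsub).intervalIntegrable)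
      (hF.stronglyMeasurableAtFilter isOpen_Ioi y hy) (hF.continuousAt (Ioi_mem_nhds hy))
  · filter_upwards [hpos] with y hy using hasDerivAt_exp_div_mul_rpow k c hy
  · filter_upwards [hpos, hlin_pos] with y hy hly
    exact neg_ne_zero.2 (mul_pos (mul_pos (exp_pos _) (rpow_pos_of_pos hy _)) hly).ne'
  · refine hlin.inv₀ hk.ne' |>.congr' ?_
    filter_upwards [hpos] with y hy
    rw [neg_div_neg_eq, div_mul_cancel_left₀ (mul_pos (exp_pos _) (rpow_pos_of_pos hy _)).ne']

/-- (L'Hôpital limit used for integrability of the majorant.) Let `a, s, β > 0` and `c ∈ ℝ`.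
Then `lim_{y→0⁺} (∫_y^β e^{a/(s²·w)}·w^c dw) / (e^{a/(s²·y)}·y^{c+2}) = s²/a`. -/
theorem statement4
    (a s β c : ℝ) (ha : 0 < a) (hs : 0 < s) (hβ : 0 < β) :
    Tendsto
      (fun y : ℝ =>
        (∫ w in y..β, Real.exp (a / (s ^ 2 * w)) * w ^ c) /
          (Real.exp (a / (s ^ 2 * y)) * y ^ (c + 2)))
      (𝓝[>] (0 : ℝ)) (𝓝 (s ^ 2 / a)) := by
  simpa only [div_div, inv_div] using
    tendsto_integral_exp_div_mul_rpow_div (div_pos ha (pow_pos hs 2)) c β hβ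
end

section
/- (Proposition 4.9 — limit of the hitting probability from a fixed starting point, expressed via the scale function.) For all 0 < x < z one has lim_{ε→0⁺} ( ∫_x^z g_ε(y) dy ) / ( ∫_ε^z g_ε(y) dy ) = ( ∫_x^z exp(−∫_y^z b₂(l)/σ(l)² dl) dy ) / ( ∫_0^z exp(−∫_y^z b₂(l)/σ(l)² dl) dy ). The left-hand ratio equals the probability that the diffusion started at x hits level ε before level z. -/
/-!
Write `g_ε(y) = exp (ε A(y) - B(y))` with `A(y) = ∫_y^z b₁/σ²` and `B(y) = ∫_y^z b₂/σ²`, so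
`g_ε → g_0` pointwise on `(0, z]`. Since `σ'(0) > 0` and `σ` vanishes only at `0`, `|σ l| ≥ c l` on
`(0, z]`; with `b₂ ≥ 0` and `b₁ ≤ M` the exponent is at most `ε M ∫_y^z dl / (c l)² ≤ M / c²`
whenever `ε ≤ y`. So the `g_ε` are uniformly bounded on `[ε, z]`, dominated convergence gives the
limits of numerator and denominator, and the limiting denominator is positive because `g_0 > 0`.
-/

open MeasureTheory Real Set Filter
open scoped Topology

theorem tendsto_intervalIntegral_of_dominated_of_tendsto_left {ι : Type*} {l : Filter ι}
    [l.IsCountablyGenerated] {F : ι → ℝ → ℝ} {f : ℝ → ℝ} {e : ι → ℝ} {a b K : ℝ}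
    (hab : a < b) (he : Tendsto e l (𝓝[≥] a))
    (hF_meas : ∀ᶠ i in l, AEStronglyMeasurable (F i) (volume.restrict (Ioc a b)))
    (h_bound : ∀ᶠ i in l, ∀ y ∈ Ioc (e i) b, ‖F i y‖ ≤ K)
    (h_lim : ∀ y ∈ Ioc a b, Tendsto (fun i => F i y) l (𝓝 (f y))) :
    Tendsto (fun i => ∫ y in e i..b, F i y) l (𝓝 (∫ y in a..b, f y)) := by
  have he_mem : ∀ᶠ i in l, e i ∈ Ico a b := he.eventually (Ico_mem_nhdsGE hab)
  -- extend `F i` by zero from `(e i, b]` to the fixed interval `(a, b]`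
  have h_eq : ∀ᶠ i in l,
      ∫ y in Ioc a b, (Ioc (e i) b).indicator (F i) y = ∫ y in e i..b, F i y := by
    filter_upwards [he_mem] with i hi
    rw [setIntegral_indicator measurableSet_Ioc, Ioc_inter_Ioc, max_eq_right hi.1, min_self,
      intervalIntegral.integral_of_le hi.2.le]
  rw [intervalIntegral.integral_of_le hab.le]
  refine Tendsto.congr' h_eq (tendsto_integral_filter_of_dominated_convergence (fun _ => K)
    ?_ ?_ (integrableOn_const measure_Ioc_lt_top.ne) ?_)
  · filter_upwards [hF_meas] with i hi using hi.indicator measurableSet_Ioc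
  · filter_upwards [h_bound, he_mem] with i hi hei
    refine ae_of_all _ fun y => ?_
    by_cases hy : y ∈ Ioc (e i) b
    · simpa [indicator_of_mem hy] using hi y hy
    · have hK : 0 ≤ K := (norm_nonneg _).trans (hi b (right_mem_Ioc.2 hei.2))
      simpa [indicator_of_notMem hy] using hK
  · refine (ae_restrict_mem measurableSet_Ioc).mono fun y hy => (h_lim y hy).congr' ?_
    filter_upwards [he.eventually (nhdsWithin_le_nhds (Iio_mem_nhds hy.1))] with i hi
    exact (indicator_of_mem (show y ∈ Ioc (e i) b from ⟨hi, hy.2⟩) _).symm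

lemma integral_le_div_of_le_div_sq_s6 {f : ℝ → ℝ} {C y z : ℝ} (hC : 0 ≤ C) (hy : 0 < y)
    (hyz : y ≤ z) (hf : IntervalIntegrable f volume y z) (hle : ∀ l ∈ Icc y z, f l ≤ C / l ^ 2) :
    ∫ l in y..z, f l ≤ C / y := by
  have h0 : (0 : ℝ) ∉ uIcc y z := by
    rw [uIcc_of_le hyz]; exact fun h => hy.not_ge h.1
  have h_int : IntervalIntegrable (fun l => C / l ^ 2) volume y z :=
    (continuousOn_const.div (continuousOn_pow 2) fun l hl => pow_ne_zero 2
      (ne_of_mem_of_not_mem hl h0)).intervalIntegrable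
  have h_eval : ∫ l in y..z, C / l ^ 2 = C * (y⁻¹ - z⁻¹) := by
    rw [intervalIntegral.integral_eq_sub_of_hasDerivAt (f := fun l => -C * l⁻¹)
      (fun l hl => ?_) h_int]
    · ring
    · exact ((hasDerivAt_inv (ne_of_mem_of_not_mem hl h0)).const_mul (-C)).congr_deriv (by ring)
  calc ∫ l in y..z, f l ≤ ∫ l in y..z, C / l ^ 2 :=
        intervalIntegral.integral_mono_on hyz hf h_int hle
    _ = C * (y⁻¹ - z⁻¹) := h_eval
    _ ≤ C / y := by
      rw [div_eq_mul_inv]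
      exact mul_le_mul_of_nonneg_left (by linarith [inv_nonneg.2 (hy.le.trans hyz)]) hC

lemma exists_pos_mul_le_abs_of_hasDerivWithinAt {σ : ℝ → ℝ} {s z : ℝ}
    (hσc : ContinuousOn σ (Ioc 0 z)) (hσ0 : σ 0 = 0) (hσne : ∀ l ∈ Ioc 0 z, σ l ≠ 0)
    (hσ' : HasDerivWithinAt σ s (Ici 0) 0) (hs : 0 < s) :
    ∃ c > 0, ∀ l ∈ Ioc 0 z, c * l ≤ |σ l| := by
  have h_slope : ∀ᶠ l in 𝓝[>] 0, s / 2 < σ l / l := by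
    have := hasDerivWithinAt_iff_tendsto_slope.mp hσ'
    rw [Ici_sdiff_left] at this
    filter_upwards [this.eventually (eventually_gt_nhds (half_lt_self hs))] with l hl
    simpa [slope_def_field, hσ0] using hl
  obtain ⟨δ, hδ, hδs⟩ := mem_nhdsGT_iff_exists_Ioo_subset.mp h_slope
  have hsub : Icc δ z ⊆ Ioc 0 z := fun l hl => ⟨hδ.trans_le hl.1, hl.2⟩
  obtain ⟨c, hc, hcσ⟩ : ∃ c > 0, ∀ l ∈ Icc δ z, c ≤ |σ l| / l :=
    isCompact_Icc.exists_forall_le'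
      ((hσc.mono hsub).abs.div continuousOn_id fun l hl => (hsub hl).1.ne')
      fun l hl => div_pos (abs_pos.2 (hσne l (hsub hl))) (hsub hl).1
  refine ⟨min (s / 2) c, lt_min (half_pos hs) hc, fun l hl => ?_⟩
  rcases lt_or_ge l δ with hlδ | hlδ
  · calc min (s / 2) c * l ≤ s / 2 * l := by gcongr; exacts [hl.1.le, min_le_left _ _]
      _ ≤ σ l := ((lt_div_iff₀ hl.1).mp (hδs ⟨hl.1, hlδ⟩)).le
      _ ≤ |σ l| := le_abs_self _
  · calc min (s / 2) c * l ≤ c * l := by gcongr; exacts [hl.1.le, min_le_right _ _]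
      _ ≤ |σ l| := (le_div_iff₀ hl.1).mp (hcσ l ⟨hlδ, hl.2⟩)

lemma intervalIntegrable_of_continuousOn_Ioi {h : ℝ → ℝ} {a y z : ℝ}
    (hh : ContinuousOn h (Ioi a)) (hy : a < y) (hz : a < z) :
    IntervalIntegrable h volume y z :=
  (hh.mono fun _ hl => (lt_min hy hz).trans_le hl.1).intervalIntegrable

lemma continuousOn_integral_left_of_continuousOn_Ioi {h : ℝ → ℝ} {a z : ℝ}
    (hh : ContinuousOn h (Ioi a)) (hz : a < z) :
    ContinuousOn (fun y => ∫ l in y..z, h l) (Ioi a) := fun y hy =>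
  (intervalIntegral.integral_hasDerivAt_left (intervalIntegrable_of_continuousOn_Ioi hh hy hz)
    (hh.stronglyMeasurableAtFilter isOpen_Ioi y hy)
    (hh.continuousAt (Ioi_mem_nhds hy))).continuousAt.continuousWithinAt

-- The paper's `g_ε(y)`, with `z` the upper level.
noncomputable def scaleDensity (b1 b2 σ : ℝ → ℝ) (z ε y : ℝ) : ℝ :=
  exp (∫ l in y..z, (ε * b1 l - b2 l) / σ l ^ 2)

section ScaleDensity

variable {b1 b2 σ : ℝ → ℝ} {z : ℝ}

lemma scaleDensity_zero (y : ℝ) :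
    scaleDensity b1 b2 σ z 0 y = exp (-∫ l in y..z, b2 l / σ l ^ 2) := by
  simp [scaleDensity, neg_div, intervalIntegral.integral_neg]

lemma continuous_scaleDensity_apply {y : ℝ}
    (hb1 : IntervalIntegrable (fun l => b1 l / σ l ^ 2) volume y z)
    (hb2 : IntervalIntegrable (fun l => b2 l / σ l ^ 2) volume y z) :
    Continuous fun ε => scaleDensity b1 b2 σ z ε y := by
  have h_lin : ∀ ε, scaleDensity b1 b2 σ z ε y =
      exp (ε * (∫ l in y..z, b1 l / σ l ^ 2) - ∫ l in y..z, b2 l / σ l ^ 2) := fun ε => by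
    rw [scaleDensity, ← intervalIntegral.integral_const_mul,
      ← intervalIntegral.integral_sub (hb1.const_mul ε) hb2]
    simp only [mul_div_assoc', sub_div]
  simp only [h_lin]
  fun_prop

lemma continuousOn_scaleDensity (hb1 : ContinuousOn b1 (Ioi 0)) (hb2 : ContinuousOn b2 (Ioi 0))
    (hσ : ContinuousOn σ (Ioi 0)) (hσne : ∀ l ∈ Ioi 0, σ l ≠ 0) (hz : 0 < z) (ε : ℝ) :
    ContinuousOn (scaleDensity b1 b2 σ z ε) (Ioi 0) :=
  continuous_exp.comp_continuousOn <| continuousOn_integral_left_of_continuousOn_Ioi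
    (((continuousOn_const.mul hb1).sub hb2).div (hσ.pow 2) fun l hl => pow_ne_zero 2 (hσne l hl))
    hz

lemma scaleDensity_le {M c ε y : ℝ} (hM : 0 ≤ M) (hb1 : ∀ l ∈ Ioc 0 z, b1 l ≤ M)
    (hb2 : ∀ l ∈ Ioc 0 z, 0 ≤ b2 l) (hc : 0 < c) (hcσ : ∀ l ∈ Ioc 0 z, c * l ≤ |σ l|)
    (hint : IntervalIntegrable (fun l => (ε * b1 l - b2 l) / σ l ^ 2) volume y z)
    (hε : 0 ≤ ε) (hεy : ε ≤ y) (hy : 0 < y) (hyz : y ≤ z) :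
    scaleDensity b1 b2 σ z ε y ≤ exp (M / c ^ 2) := by
  refine exp_le_exp.2 <| (integral_le_div_of_le_div_sq_s6 (C := ε * M / c ^ 2) (by positivity)
    hy hyz hint fun l hl => ?_).trans ?_
  · have hl0 : l ∈ Ioc 0 z := ⟨hy.trans_le hl.1, hl.2⟩
    have hσl : (c * l) ^ 2 ≤ σ l ^ 2 := by
      rw [← sq_abs (σ l)]; exact pow_le_pow_left₀ (by positivity [hl0.1]) (hcσ l hl0) 2
    calc (ε * b1 l - b2 l) / σ l ^ 2 ≤ ε * M / (c * l) ^ 2 := by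
          refine div_le_div₀ (by positivity) ?_ (by positivity [hl0.1]) hσl
          nlinarith [hb1 l hl0, hb2 l hl0]
      _ = ε * M / c ^ 2 / l ^ 2 := by ring
  · rw [div_le_div_iff₀ hy (by positivity)]
    calc ε * M / c ^ 2 * c ^ 2 = ε * M := by field_simp
      _ ≤ M * y := by nlinarith

theorem tendsto_scaleDensity_ratio {M c x : ℝ} (hb1 : ContinuousOn b1 (Ioi 0))
    (hb2 : ContinuousOn b2 (Ioi 0)) (hσ : ContinuousOn σ (Ioi 0)) (hσne : ∀ l ∈ Ioi 0, σ l ≠ 0)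
    (hM : ∀ l ∈ Ioc 0 z, b1 l ≤ M) (hb2_nonneg : ∀ l ∈ Ioc 0 z, 0 ≤ b2 l) (hc : 0 < c)
    (hcσ : ∀ l ∈ Ioc 0 z, c * l ≤ |σ l|) (hx : 0 < x) (hxz : x < z) :
    Tendsto
      (fun ε => (∫ y in x..z, scaleDensity b1 b2 σ z ε y) /
        ∫ y in ε..z, scaleDensity b1 b2 σ z ε y)
      (𝓝[>] 0)
      (𝓝 ((∫ y in x..z, scaleDensity b1 b2 σ z 0 y) /
        ∫ y in 0..z, scaleDensity b1 b2 σ z 0 y)) := by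
  have hz : 0 < z := hx.trans hxz
  have h_div : ∀ g : ℝ → ℝ, ContinuousOn g (Ioi 0) → ∀ y ∈ Ioc 0 z,
      IntervalIntegrable (fun l => g l / σ l ^ 2) volume y z := fun g hg y hy =>
    intervalIntegrable_of_continuousOn_Ioi
      (hg.div (hσ.pow 2) fun l hl => pow_ne_zero 2 (hσne l hl)) hy.1 hz
  have h_bound : ∀ ε, 0 ≤ ε → ∀ y ∈ Ioc ε z, 0 < y →
      ‖scaleDensity b1 b2 σ z ε y‖ ≤ exp (max M 0 / c ^ 2) := fun ε hε y hy hy0 =>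
    (norm_of_nonneg (exp_pos _).le).trans_le <|
      scaleDensity_le (le_max_right _ _) (fun l hl => (hM l hl).trans (le_max_left _ _))
        hb2_nonneg hc hcσ (h_div _ ((continuousOn_const.mul hb1).sub hb2) y ⟨hy0, hy.2⟩)
        hε hy.1.le hy0 hy.2
  have h_lim : ∀ y ∈ Ioc 0 z, Tendsto (fun ε => scaleDensity b1 b2 σ z ε y) (𝓝[>] 0)
      (𝓝 (scaleDensity b1 b2 σ z 0 y)) := fun y hy =>
    ((continuous_scaleDensity_apply (h_div _ hb1 y hy) (h_div _ hb2 y hy)).tendsto 0).mono_left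
      nhdsWithin_le_nhds
  have h_meas : ∀ ε a, 0 ≤ a →
      AEStronglyMeasurable (scaleDensity b1 b2 σ z ε) (volume.restrict (Ioc a z)) := fun ε a ha =>
    (continuousOn_scaleDensity hb1 hb2 hσ hσne hz ε).aestronglyMeasurable measurableSet_Ioi
      |>.mono_measure (Measure.restrict_mono (fun y hy => ha.trans_lt hy.1) le_rfl)
  have h_num := tendsto_intervalIntegral_of_dominated_of_tendsto_left hxz
    (tendsto_const_nhdsWithin self_mem_Ici) (.of_forall fun ε => h_meas ε x hx.le)
    (by filter_upwards [Ioo_mem_nhdsGT hx] with ε hε y hy using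
      h_bound ε hε.1.le y ⟨hε.2.trans hy.1, hy.2⟩ (hx.trans hy.1))
    fun y hy => h_lim y ⟨hx.trans hy.1, hy.2⟩
  have h_den := tendsto_intervalIntegral_of_dominated_of_tendsto_left hz
    (tendsto_nhdsWithin_mono_right Ioi_subset_Ici_self tendsto_id)
    (.of_forall fun ε => h_meas ε 0 le_rfl)
    (by filter_upwards [self_mem_nhdsWithin] with ε (hε : 0 < ε) y hy using
      h_bound ε hε.le y hy (hε.trans hy.1))
    h_lim
  have h_pos : 0 < ∫ y in (0 : ℝ)..z, scaleDensity b1 b2 σ z 0 y :=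
    intervalIntegral.intervalIntegral_pos_of_pos_on
      ((intervalIntegrable_iff_integrableOn_Ioc_of_le hz.le).2 <|
        (integrableOn_const measure_Ioc_lt_top.ne).mono' (h_meas 0 0 le_rfl) <|
          (ae_restrict_mem measurableSet_Ioc).mono fun y hy => h_bound 0 le_rfl y hy hy.1)
      (fun y _ => exp_pos _) hz
  exact h_num.div h_den h_pos.ne'

end ScaleDensity

theorem statement6_general
    (b1 b2 σ : ℝ → ℝ)
    (hb1 : ContDiffOn ℝ 1 b1 (Ici 0))
    (hb1sup : ∃ M : ℝ, ∀ x ∈ Ici (0 : ℝ), b1 x ≤ M)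
    (hb2 : ContDiffOn ℝ 2 b2 (Ici 0))
    (hb2nonneg : ∀ x ∈ Ici (0 : ℝ), 0 ≤ b2 x)
    (hσ : ContDiffOn ℝ 2 σ (Ici 0))
    (hσzero : ∀ x ∈ Ici (0 : ℝ), (σ x = 0 ↔ x = 0))
    (hσ' : 0 < derivWithin σ (Ici 0) 0)
    (x z : ℝ) (hx : 0 < x) (hxz : x < z) :
    Tendsto
      (fun ε : ℝ =>
        (∫ y in x..z, Real.exp (∫ l in y..z, (ε * b1 l - b2 l) / σ l ^ 2)) /
          (∫ y in ε..z, Real.exp (∫ l in y..z, (ε * b1 l - b2 l) / σ l ^ 2)))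
      (𝓝[>] (0 : ℝ))
      (𝓝 ((∫ y in x..z, Real.exp (-∫ l in y..z, b2 l / σ l ^ 2)) /
        (∫ y in (0 : ℝ)..z, Real.exp (-∫ l in y..z, b2 l / σ l ^ 2)))) := by
  obtain ⟨M, hM⟩ := hb1sup
  have hσne : ∀ l ∈ Ioi (0 : ℝ), σ l ≠ 0 := fun l (hl : 0 < l) h =>
    hl.ne' ((hσzero l hl.le).1 h)
  have hσc := hσ.continuousOn.mono Ioi_subset_Ici_self
  obtain ⟨c, hc, hcσ⟩ := exists_pos_mul_le_abs_of_hasDerivWithinAt (z := z)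
    (hσc.mono Ioc_subset_Ioi_self) ((hσzero 0 self_mem_Ici).2 rfl) (fun l hl => hσne l hl.1)
    (hσ.differentiableOn (by norm_num) 0 self_mem_Ici).hasDerivWithinAt hσ'
  have h_lim := tendsto_scaleDensity_ratio (hb1.continuousOn.mono Ioi_subset_Ici_self)
    (hb2.continuousOn.mono Ioi_subset_Ici_self) hσc hσne (fun l hl => hM l hl.1.le)
    (fun l hl => hb2nonneg l hl.1.le) hc hcσ hx hxz
  simp only [scaleDensity_zero] at h_lim
  exact h_lim

/-- (Proposition 4.9 — limit of the hitting probability from a fixed starting point.) For all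
`0 < x < z`:
`lim_{ε→0⁺} (∫_x^z g_ε(y) dy)/(∫_ε^z g_ε(y) dy)
  = (∫_x^z exp(−∫_y^z b₂/σ² dl) dy)/(∫_0^z exp(−∫_y^z b₂/σ² dl) dy)`. -/
theorem statement6
    (b1 b2 σ : ℝ → ℝ)
    (hb1 : ContDiffOn ℝ 1 b1 (Ici 0))
    (hb1inf : ∃ m > 0, ∀ x ∈ Ici (0 : ℝ), m ≤ b1 x)
    (hb1sup : ∃ M : ℝ, ∀ x ∈ Ici (0 : ℝ), b1 x ≤ M)
    (hb2 : ContDiffOn ℝ 2 b2 (Ici 0))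
    (hb2nonneg : ∀ x ∈ Ici (0 : ℝ), 0 ≤ b2 x)
    (hb20 : b2 0 = 0)
    (hb2' : 0 < derivWithin b2 (Ici 0) 0)
    (hσ : ContDiffOn ℝ 2 σ (Ici 0))
    (hσnonneg : ∀ x ∈ Ici (0 : ℝ), 0 ≤ σ x)
    (hσzero : ∀ x ∈ Ici (0 : ℝ), (σ x = 0 ↔ x = 0))
    (hσ' : 0 < derivWithin σ (Ici 0) 0)
    (x z : ℝ) (hx : 0 < x) (hxz : x < z) :
    Tendsto
      (fun ε : ℝ =>
        (∫ y in x..z, Real.exp (∫ l in y..z, (ε * b1 l - b2 l) / σ l ^ 2)) /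
          (∫ y in ε..z, Real.exp (∫ l in y..z, (ε * b1 l - b2 l) / σ l ^ 2)))
      (𝓝[>] (0 : ℝ))
      (𝓝 ((∫ y in x..z, Real.exp (-∫ l in y..z, b2 l / σ l ^ 2)) /
        (∫ y in (0 : ℝ)..z, Real.exp (-∫ l in y..z, b2 l / σ l ^ 2)))) :=
  statement6_general b1 b2 σ hb1 hb1sup hb2 hb2nonneg hσ hσzero hσ' x z hx hxz
end

section
/- (Analytic core of Proposition 4.4: limit of the expected upcrossing time, written via the Green kernel.) Let 0 < α < β and define h_ε(w,y) := (ε²/σ(yε)²)·exp( ∫_{wε}^{yε} (ε·b₁(l) − b₂(l))/σ(l)² dl ) and H(w,y) := e^{(a/s²)(1/w − 1/y)}·w^{b/s²}/y^{b/s²+2}. Then lim_{ε→0⁺} 2·[ ∫_0^α ∫_α^β h_ε(w,y) dw dy + ∫_α^β ∫_y^β h_ε(w,y) dw dy ] = (2/s²)·[ ∫_0^α ∫_α^β H(w,y) dw dy + ∫_α^β ∫_y^β H(w,y) dw dy ], and this limit is finite and positive. (The left-hand side equals the expected hitting time E_{αε}[T_{βε}] of level βε for the diffusion with λ = 1 started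 at αε.) -/
open MeasureTheory Real Set Filter
open scoped Topology Interval

/-!
Substituting `l = uε`, the exponent of `h_ε(w, y)` becomes
`∫_w^y ε (ε b₁(uε) − b₂(uε)) / σ(uε)² du`, whose integrand tends to `a/(s²u²) − b/(s²u)`
because `b₁ → a`, `b₂(t)/t → b` and `σ(t)/t → s`; with `ε²/σ(yε)² → 1/(s²y²)` this gives
`h_ε → H/s²` pointwise. On a neighbourhood `(0, δ)` of `0` the coefficients are within a factor
`2` of `a`, `b l`, `s l`, so for `εβ < δ` one gets
`h_ε(w, y) ≤ (4/s²) e^{κ(1/w − 1/y)} (w/y)^c / y²` with `κ = a/(8s²)`, `c = 8b/s²`. On the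
region `y ≤ w`, `α ≤ w ≤ β` this is bounded, since `e^{−κ/y}` beats every power of `1/y`.
Bounded convergence, in the inner and then in the outer integral, gives the limit, which is
positive because `H > 0`.
-/

theorem tendsto_div_self_of_hasDerivWithinAt {g : ℝ → ℝ} {d : ℝ}
    (hg : HasDerivWithinAt g d (Ici 0) 0) (h0 : g 0 = 0) :
    Tendsto (fun t => g t / t) (𝓝[>] 0) (𝓝 d) :=
  ((hasDerivWithinAt_iff_tendsto_slope' (lt_irrefl 0)).1 (hg.mono Ioi_subset_Ici_self)).congr
    fun t => by simp [slope, h0, div_eq_inv_mul]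

theorem tendsto_const_mul_nhdsGT_zero_s7 {x : ℝ} (hx : 0 < x) :
    Tendsto (x * ·) (𝓝[>] 0) (𝓝[>] 0) :=
  tendsto_iff_comap.2 (comap_mulLeft_nhdsGT_zero hx).ge

theorem eventually_mem_Icc_half_two {ι : Type*} {l : Filter ι} {g : ι → ℝ} {c : ℝ}
    (hg : Tendsto g l (𝓝 c)) (hc : 0 < c) : ∀ᶠ i in l, g i ∈ Icc (c / 2) (2 * c) :=
  hg (Icc_mem_nhds (by linarith) (by linarith))

theorem eventually_mem_Icc_half_two_mul {g : ℝ → ℝ} {c : ℝ}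
    (hg : Tendsto (fun t => g t / t) (𝓝[>] 0) (𝓝 c)) (hc : 0 < c) :
    ∀ᶠ t in 𝓝[>] 0, g t ∈ Icc (c / 2 * t) (2 * c * t) := by
  filter_upwards [eventually_mem_Icc_half_two hg hc, self_mem_nhdsWithin] with t ht (ht0 : 0 < t)
  rwa [mem_Icc, ← le_div_iff₀ ht0, ← div_le_iff₀ ht0]

theorem mul_mem_Ioo_of_mem_Ioc {u ε M δ : ℝ} (hu : u ∈ Ioc 0 M) (hε : ε ∈ Ioo 0 (δ / M)) :
    u * ε ∈ Ioo 0 δ := by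
  have hM : 0 < M := hu.1.trans_le hu.2
  refine ⟨mul_pos hu.1 hε.1, ?_⟩
  calc u * ε ≤ M * ε := by gcongr; exacts [hε.1.le, hu.2]
    _ < δ := (lt_div_iff₀' hM).1 hε.2

theorem ContinuousOn.intervalIntegral_primitive {f : ℝ → ℝ} {S : Set ℝ} (hf : ContinuousOn f S)
    (hS : IsOpen S) (hS' : S.OrdConnected) {c : ℝ} (hc : c ∈ S) :
    ContinuousOn (fun x => ∫ t in c..x, f t) S := fun x hx =>
  (intervalIntegral.integral_hasDerivAt_right
    (hf.mono (hS'.uIcc_subset hc hx)).intervalIntegrable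
    (hf.stronglyMeasurableAtFilter hS x hx)
    (hf.continuousAt (hS.mem_nhds hx))).continuousAt.continuousWithinAt

theorem continuousOn_intervalIntegral_mul {k g p q : ℝ → ℝ} {S T : Set ℝ} (hS : IsOpen S)
    (hS' : S.OrdConnected) (hk : ContinuousOn k S) (hg : ContinuousOn g T)
    (hp : ContinuousOn p T) (hq : ContinuousOn q T) (hpS : MapsTo p T S) (hqS : MapsTo q T S) :
    ContinuousOn (fun y => ∫ w in p y..q y, k w * g y) T := by
  intro y₀ hy₀
  have hint : ∀ x ∈ S, IntervalIntegrable k volume (p y₀) x := fun x hx =>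
    (hk.mono (hS'.uIcc_subset (hpS hy₀) hx)).intervalIntegrable
  have hK := hk.intervalIntegral_primitive hS hS' (hpS hy₀)
  refine ((((hK.comp hq hqS).sub (hK.comp hp hpS)).mul hg).congr fun y hy => ?_) y₀ hy₀
  rw [intervalIntegral.integral_mul_const,
    ← intervalIntegral.integral_interval_sub_left (hint _ (hqS hy)) (hint _ (hpS hy))]
  rfl

theorem integral_div_sq_sub_div {A B w y : ℝ} (hw : 0 < w) (hy : 0 < y) :
    ∫ u in w..y, (A / u ^ 2 - B / u) = A * (1 / w - 1 / y) + B * log (w / y) := by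
  have hpos : ∀ u ∈ uIcc w y, u ≠ 0 := fun u hu => ((lt_min hw hy).trans_le hu.1).ne'
  have hderiv : ∀ u ∈ uIcc w y,
      HasDerivAt (fun u => -(A * u⁻¹) - B * log u) (A / u ^ 2 - B / u) u := by
    intro u hu
    refine (((hasDerivAt_inv (hpos u hu)).const_mul A).neg.sub
      ((hasDerivAt_log (hpos u hu)).const_mul B)).congr_deriv ?_
    simp only [div_eq_mul_inv]
    ring
  have hcont : ContinuousOn (fun u => A / u ^ 2 - B / u) (uIcc w y) :=
    (continuousOn_const.div (continuousOn_pow 2) fun u hu => pow_ne_zero 2 (hpos u hu)).sub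
      (continuousOn_const.div continuousOn_id hpos)
  rw [intervalIntegral.integral_eq_sub_of_hasDerivAt hderiv hcont.intervalIntegrable,
    log_div hw.ne' hy.ne']
  simp only [one_div]
  ring

theorem exp_neg_div_div_pow_le {κ y : ℝ} (hκ : 0 < κ) (hy : 0 < y) (k : ℕ) :
    exp (-(κ / y)) / y ^ k ≤ k.factorial / κ ^ k := by
  have h := pow_div_factorial_le_exp (κ / y) (by positivity) k
  rw [div_pow, div_div, div_le_iff₀ (by positivity)] at h
  rw [exp_neg, div_le_div_iff₀ (by positivity) (by positivity), inv_mul_le_iff₀ (exp_pos _)]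
  linarith

theorem exists_exp_inv_sub_inv_add_log_div_sq_le {κ c α β : ℝ} (hκ : 0 < κ)
    (hα : 0 < α) (hαβ : α ≤ β) :
    ∃ C ≥ 0, ∀ w y, 0 < y → y ≤ w → α ≤ w → w ≤ β →
      exp (κ * (1 / w - 1 / y) + c * log (w / y)) / y ^ 2 ≤ C := by
  set n := ⌈c⌉₊
  have hβ : 0 < β := hα.trans_le hαβ
  refine ⟨exp (κ / α) * β ^ n * ((n + 2).factorial / κ ^ (n + 2)), by positivity,
    fun w y hy hyw hαw hwβ => ?_⟩
  have hw : 0 < w := hy.trans_le hyw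
  have hsplit : exp (κ * (1 / w - 1 / y) + c * log (w / y)) =
      exp (κ / w) * (w / y) ^ c * exp (-(κ / y)) := by
    rw [rpow_def_of_pos (div_pos hw hy), ← exp_add, ← exp_add]
    ring_nf
  have hpow : (w / y) ^ c ≤ β ^ n / y ^ n :=
    calc (w / y) ^ c ≤ (w / y) ^ (n : ℝ) :=
          rpow_le_rpow_of_exponent_le ((one_le_div hy).2 hyw) (Nat.le_ceil c)
      _ = w ^ n / y ^ n := by rw [rpow_natCast, div_pow]
      _ ≤ β ^ n / y ^ n := by gcongr
  have hexp : exp (κ / w) ≤ exp (κ / α) := exp_le_exp.2 (div_le_div_of_nonneg_left hκ.le hα hαw)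
  calc exp (κ * (1 / w - 1 / y) + c * log (w / y)) / y ^ 2
      = exp (κ / w) * (w / y) ^ c * (exp (-(κ / y)) / y ^ 2) := by rw [hsplit]; ring
    _ ≤ exp (κ / α) * (β ^ n / y ^ n) * (exp (-(κ / y)) / y ^ 2) := by gcongr
    _ = exp (κ / α) * β ^ n * (exp (-(κ / y)) / y ^ (n + 2)) := by field_simp; ring
    _ ≤ exp (κ / α) * β ^ n * ((n + 2).factorial / κ ^ (n + 2)) :=
        mul_le_mul_of_nonneg_left (exp_neg_div_div_pow_le hκ hy (n + 2)) (by positivity)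

theorem tendsto_integral_integral_of_bounded {ι : Type*} {l : Filter ι} [l.IsCountablyGenerated]
    {F : ι → ℝ → ℝ → ℝ} {G : ℝ → ℝ → ℝ} {p q : ℝ → ℝ} {c d C L : ℝ} (hC : 0 ≤ C)
    (hFw : ∀ᶠ i in l, ∀ y ∈ Ι c d,
      AEStronglyMeasurable (fun w => F i w y) (volume.restrict (Ι (p y) (q y))))
    (hFy : ∀ᶠ i in l,
      AEStronglyMeasurable (fun y => ∫ w in p y..q y, F i w y) (volume.restrict (Ι c d)))
    (hbound : ∀ᶠ i in l, ∀ y ∈ Ι c d, ∀ w ∈ Ι (p y) (q y), ‖F i w y‖ ≤ C)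
    (hpq : ∀ y ∈ Ι c d, |q y - p y| ≤ L)
    (hlim : ∀ y ∈ Ι c d, ∀ w ∈ Ι (p y) (q y), Tendsto (fun i => F i w y) l (𝓝 (G w y))) :
    Tendsto (fun i => ∫ y in c..d, ∫ w in p y..q y, F i w y) l
      (𝓝 (∫ y in c..d, ∫ w in p y..q y, G w y)) := by
  refine intervalIntegral.tendsto_integral_filter_of_dominated_convergence (fun _ => C * L) hFy
    ?_ intervalIntegrable_const (ae_of_all _ fun y hy => ?_)
  · filter_upwards [hbound] with i hi
    refine ae_of_all _ fun y hy => ?_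
    calc ‖∫ w in p y..q y, F i w y‖ ≤ C * |q y - p y| :=
          intervalIntegral.norm_integral_le_of_norm_le_const (hi y hy)
      _ ≤ C * L := by gcongr; exact hpq y hy
  · refine intervalIntegral.tendsto_integral_filter_of_dominated_convergence (fun _ => C)
      (hFw.mono fun i hi => hi y hy) ?_ intervalIntegrable_const
      (ae_of_all _ fun w hw => hlim y hy w hw)
    filter_upwards [hbound] with i hi
    exact ae_of_all _ fun w hw => hi y hy w hw

/-- `2μ/σ²` for the diffusion with `λ = 1`, whose drift is `μ = (ε b₁ − b₂)/2`. -/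
noncomputable def driftRatio (b1 b2 σ : ℝ → ℝ) (ε l : ℝ) : ℝ := (ε * b1 l - b2 l) / σ l ^ 2

/-- `ε² r(yε) / p(wε)`, with `r` the speed density and `p` the reciprocal scale density. -/
noncomputable def greenKernel (b1 b2 σ : ℝ → ℝ) (ε w y : ℝ) : ℝ :=
  ε ^ 2 / σ (y * ε) ^ 2 * exp (∫ l in (w * ε)..(y * ε), driftRatio b1 b2 σ ε l)

noncomputable def limitKernel (a b s w y : ℝ) : ℝ :=
  exp (a / s ^ 2 * (1 / w - 1 / y)) * w ^ (b / s ^ 2) / y ^ (b / s ^ 2 + 2)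

theorem greenKernel_nonneg (b1 b2 σ : ℝ → ℝ) (ε w y : ℝ) : 0 ≤ greenKernel b1 b2 σ ε w y := by
  unfold greenKernel
  positivity

theorem limitKernel_eq (a b s : ℝ) {w y : ℝ} (hw : 0 < w) (hy : 0 < y) :
    limitKernel a b s w y =
      exp (a / s ^ 2 * (1 / w - 1 / y) + b / s ^ 2 * log (w / y)) / y ^ 2 := by
  rw [limitKernel, exp_add, mul_comm (b / s ^ 2), ← rpow_def_of_pos (div_pos hw hy),
    div_rpow hw.le hy.le, rpow_add hy, rpow_two]
  field_simp

theorem limitKernel_eq_mul (a b s w y : ℝ) :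
    limitKernel a b s w y =
      exp (a / s ^ 2 / w) * w ^ (b / s ^ 2) * (exp (-(a / s ^ 2 / y)) / y ^ (b / s ^ 2 + 2)) := by
  rw [limitKernel, show a / s ^ 2 * (1 / w - 1 / y) = a / s ^ 2 / w + -(a / s ^ 2 / y) by ring,
    exp_add]
  ring

theorem limitKernel_pos (a b s : ℝ) {w y : ℝ} (hw : 0 < w) (hy : 0 < y) :
    0 < limitKernel a b s w y := by
  unfold limitKernel
  positivity

theorem limitKernel_nonneg (a b s : ℝ) {w y : ℝ} (hw : 0 ≤ w) (hy : 0 ≤ y) :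
    0 ≤ limitKernel a b s w y := by
  unfold limitKernel
  positivity

theorem integral_integral_limitKernel_pos (a b s : ℝ) {α β : ℝ} (hα : 0 < α) (hαβ : α < β) :
    0 < (∫ y in (0 : ℝ)..α, ∫ w in α..β, limitKernel a b s w y) +
      ∫ y in α..β, ∫ w in y..β, limitKernel a b s w y := by
  have hu : ContinuousOn (fun w => exp (a / s ^ 2 / w) * w ^ (b / s ^ 2)) (Ioi 0) :=
    (continuous_exp.comp_continuousOn (continuousOn_const.div continuousOn_id
      fun w hw => (mem_Ioi.1 hw).ne')).mul
      (continuousOn_id.rpow_const fun w hw => Or.inl (mem_Ioi.1 hw).ne')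
  have hv : ContinuousOn (fun y => exp (-(a / s ^ 2 / y)) / y ^ (b / s ^ 2 + 2)) (Ioi 0) :=
    (continuous_exp.comp_continuousOn (continuousOn_const.div continuousOn_id
      fun y hy => (mem_Ioi.1 hy).ne').neg).div
      (continuousOn_id.rpow_const fun y hy => Or.inl (mem_Ioi.1 hy).ne')
      fun y hy => (rpow_pos_of_pos hy _).ne'
  have hcont : ContinuousOn (fun y => ∫ w in y..β, limitKernel a b s w y) (Ioi 0) := by
    simp_rw [limitKernel_eq_mul]
    exact continuousOn_intervalIntegral_mul isOpen_Ioi ordConnected_Ioi hu hv continuousOn_id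
      continuousOn_const (mapsTo_id _) fun _ _ => hα.trans hαβ
  have hfirst : 0 ≤ ∫ y in (0 : ℝ)..α, ∫ w in α..β, limitKernel a b s w y :=
    intervalIntegral.integral_nonneg hα.le fun y hy =>
      intervalIntegral.integral_nonneg hαβ.le fun w hw =>
        limitKernel_nonneg a b s (hα.le.trans hw.1) hy.1
  have hsecond : 0 < ∫ y in α..β, ∫ w in y..β, limitKernel a b s w y := by
    refine intervalIntegral.intervalIntegral_pos_of_pos_on
      (hcont.mono fun y hy => hα.trans_le ((uIcc_of_le hαβ.le ▸ hy).1)).intervalIntegrable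
      (fun y hy => ?_) hαβ
    have hy0 : 0 < y := hα.trans hy.1
    refine intervalIntegral.intervalIntegral_pos_of_pos_on ?_
      (fun w hw => limitKernel_pos a b s (hy0.trans hw.1) hy0) hy.2
    refine ((hu.mul continuousOn_const).congr fun w _ => limitKernel_eq_mul a b s w y).mono
      ?_ |>.intervalIntegrable
    exact fun w hw => hy0.trans_le ((uIcc_of_le hy.2.le ▸ hw).1)
  linarith

structure CoeffsNearZero (b1 b2 σ : ℝ → ℝ) (a b s δ : ℝ) : Prop where
  a_pos : 0 < a
  b_pos : 0 < b
  s_pos : 0 < s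
  δ_pos : 0 < δ
  tendsto_b1 : Tendsto b1 (𝓝[>] 0) (𝓝 a)
  tendsto_b2_div : Tendsto (fun t => b2 t / t) (𝓝[>] 0) (𝓝 b)
  tendsto_σ_div : Tendsto (fun t => σ t / t) (𝓝[>] 0) (𝓝 s)
  continuousOn_b1 : ContinuousOn b1 (Ioo 0 δ)
  continuousOn_b2 : ContinuousOn b2 (Ioo 0 δ)
  continuousOn_σ : ContinuousOn σ (Ioo 0 δ)
  b1_mem : ∀ l ∈ Ioo 0 δ, b1 l ∈ Icc (a / 2) (2 * a)
  b2_mem : ∀ l ∈ Ioo 0 δ, b2 l ∈ Icc (b / 2 * l) (2 * b * l)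
  σ_mem : ∀ l ∈ Ioo 0 δ, σ l ∈ Icc (s / 2 * l) (2 * s * l)

theorem exists_coeffsNearZero {b1 b2 σ : ℝ → ℝ} (hb1 : ContinuousOn b1 (Ici 0))
    (hb2 : DifferentiableOn ℝ b2 (Ici 0)) (hσ : DifferentiableOn ℝ σ (Ici 0))
    (hb20 : b2 0 = 0) (hσ0 : σ 0 = 0) (ha : 0 < b1 0) (hb : 0 < derivWithin b2 (Ici 0) 0)
    (hs : 0 < derivWithin σ (Ici 0) 0) :
    ∃ δ, CoeffsNearZero b1 b2 σ (b1 0) (derivWithin b2 (Ici 0) 0) (derivWithin σ (Ici 0) 0) δ := by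
  have hb1' : Tendsto b1 (𝓝[>] 0) (𝓝 (b1 0)) :=
    (hb1 0 self_mem_Ici).tendsto.mono_left (nhdsWithin_mono _ Ioi_subset_Ici_self)
  have hb2' := tendsto_div_self_of_hasDerivWithinAt (hb2 0 self_mem_Ici).hasDerivWithinAt hb20
  have hσ' := tendsto_div_self_of_hasDerivWithinAt (hσ 0 self_mem_Ici).hasDerivWithinAt hσ0
  obtain ⟨δ, hδ, hsub⟩ := mem_nhdsGT_iff_exists_Ioo_subset.1
    ((eventually_mem_Icc_half_two hb1' ha).and
      ((eventually_mem_Icc_half_two_mul hb2' hb).and (eventually_mem_Icc_half_two_mul hσ' hs)))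
  have hIoo : Ioo 0 δ ⊆ Ici 0 := Ioo_subset_Ioi_self.trans Ioi_subset_Ici_self
  exact ⟨δ, ha, hb, hs, hδ, hb1', hb2', hσ', hb1.mono hIoo, hb2.continuousOn.mono hIoo,
    hσ.continuousOn.mono hIoo, fun l hl => (hsub hl).1, fun l hl => (hsub hl).2.1,
    fun l hl => (hsub hl).2.2⟩

namespace CoeffsNearZero

variable {b1 b2 σ : ℝ → ℝ} {a b s δ ε l u w y : ℝ}

theorem sigma_pos (h : CoeffsNearZero b1 b2 σ a b s δ) (hl : l ∈ Ioo 0 δ) : 0 < σ l :=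
  (mul_pos (half_pos h.s_pos) hl.1).trans_le (h.σ_mem l hl).1

theorem continuousOn_driftRatio (h : CoeffsNearZero b1 b2 σ a b s δ) (ε : ℝ) :
    ContinuousOn (driftRatio b1 b2 σ ε) (Ioo 0 δ) :=
  ((continuousOn_const.mul h.continuousOn_b1).sub h.continuousOn_b2).div
    (h.continuousOn_σ.pow 2) fun _ hl => pow_ne_zero 2 (h.sigma_pos hl).ne'

theorem driftRatio_ge (h : CoeffsNearZero b1 b2 σ a b s δ) (hε : 0 ≤ ε) (hl : l ∈ Ioo 0 δ) :
    ε * (a / (8 * s ^ 2)) / l ^ 2 - 8 * b / s ^ 2 / l ≤ driftRatio b1 b2 σ ε l := by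
  obtain ⟨hb1, -⟩ := h.b1_mem l hl
  obtain ⟨-, hb2⟩ := h.b2_mem l hl
  obtain ⟨hσl, hσu⟩ := h.σ_mem l hl
  have := h.a_pos; have := h.b_pos; have := h.s_pos; have := h.sigma_pos hl; have hl0 := hl.1
  have h1 : ε * (a / 2) / (2 * s * l) ^ 2 ≤ ε * b1 l / σ l ^ 2 :=
    div_le_div₀ (mul_nonneg hε (by linarith)) (by gcongr) (by positivity) (by gcongr)
  have h2 : b2 l / σ l ^ 2 ≤ 2 * b * l / (s / 2 * l) ^ 2 :=
    div_le_div₀ (by positivity) hb2 (by positivity) (by gcongr)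
  calc ε * (a / (8 * s ^ 2)) / l ^ 2 - 8 * b / s ^ 2 / l
      = ε * (a / 2) / (2 * s * l) ^ 2 - 2 * b * l / (s / 2 * l) ^ 2 := by field_simp; ring
    _ ≤ driftRatio b1 b2 σ ε l := by rw [driftRatio, sub_div]; linarith

theorem abs_driftRatio_le (h : CoeffsNearZero b1 b2 σ a b s δ) (hε : 0 ≤ ε) (hl : l ∈ Ioo 0 δ) :
    |driftRatio b1 b2 σ ε l| ≤ 8 * (a * ε + b * l) / (s ^ 2 * l ^ 2) := by
  obtain ⟨hb1l, hb1u⟩ := h.b1_mem l hl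
  obtain ⟨hb2l, hb2u⟩ := h.b2_mem l hl
  have := h.a_pos; have := h.b_pos; have := h.s_pos; have hl0 := hl.1
  have hnum : |ε * b1 l - b2 l| ≤ 2 * (a * ε + b * l) := by
    have : 0 ≤ b / 2 * l := by positivity
    rw [abs_le]; constructor <;> nlinarith
  rw [driftRatio, abs_div, abs_of_nonneg (sq_nonneg (σ l))]
  calc |ε * b1 l - b2 l| / σ l ^ 2 ≤ 2 * (a * ε + b * l) / (s / 2 * l) ^ 2 :=
        div_le_div₀ (by positivity) hnum (by positivity) (by gcongr; exact (h.σ_mem l hl).1)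
    _ = 8 * (a * ε + b * l) / (s ^ 2 * l ^ 2) := by field_simp; ring

theorem integral_driftRatio_le (h : CoeffsNearZero b1 b2 σ a b s δ) (hε : 0 < ε) (hy : 0 < y)
    (hyw : y ≤ w) (hwε : w * ε < δ) :
    ∫ l in (w * ε)..(y * ε), driftRatio b1 b2 σ ε l ≤
      a / (8 * s ^ 2) * (1 / w - 1 / y) + 8 * b / s ^ 2 * log (w / y) := by
  have hyε : 0 < y * ε := mul_pos hy hε
  have hle : y * ε ≤ w * ε := mul_le_mul_of_nonneg_right hyw hε.le
  have hsub : uIcc (y * ε) (w * ε) ⊆ Ioo 0 δ := by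
    rw [uIcc_of_le hle]; exact fun l hl => ⟨hyε.trans_le hl.1, hl.2.trans_lt hwε⟩
  have hlower : ContinuousOn (fun l => ε * (a / (8 * s ^ 2)) / l ^ 2 - 8 * b / s ^ 2 / l)
      (uIcc (y * ε) (w * ε)) :=
    (continuousOn_const.div (continuousOn_pow 2) fun l hl => pow_ne_zero 2 (hsub hl).1.ne').sub
      (continuousOn_const.div continuousOn_id fun l hl => (hsub hl).1.ne')
  have hmono := intervalIntegral.integral_mono_on (μ := volume) hle hlower.intervalIntegrable
    ((h.continuousOn_driftRatio ε).mono hsub).intervalIntegrable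
    fun l hl => h.driftRatio_ge hε.le (hsub (Icc_subset_uIcc hl))
  rw [integral_div_sq_sub_div hyε (hyε.trans_le hle), mul_div_mul_right _ _ hε.ne',
    ← inv_div w y, log_inv] at hmono
  have hscale : ε * (a / (8 * s ^ 2)) * (1 / (y * ε) - 1 / (w * ε)) =
      a / (8 * s ^ 2) * (1 / y - 1 / w) := by
    field_simp
  rw [intervalIntegral.integral_symm]
  linarith

theorem greenKernel_le (h : CoeffsNearZero b1 b2 σ a b s δ) (hε : 0 < ε) (hy : 0 < y)
    (hyw : y ≤ w) (hwε : w * ε < δ) :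
    greenKernel b1 b2 σ ε w y ≤ 4 / s ^ 2 *
      (exp (a / (8 * s ^ 2) * (1 / w - 1 / y) + 8 * b / s ^ 2 * log (w / y)) / y ^ 2) := by
  have hyε : y * ε ∈ Ioo 0 δ :=
    ⟨mul_pos hy hε, (mul_le_mul_of_nonneg_right hyw hε.le).trans_lt hwε⟩
  have := h.s_pos
  have hpre : ε ^ 2 / σ (y * ε) ^ 2 ≤ 4 / s ^ 2 / y ^ 2 :=
    calc ε ^ 2 / σ (y * ε) ^ 2 ≤ ε ^ 2 / (s / 2 * (y * ε)) ^ 2 :=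
          div_le_div_of_nonneg_left (sq_nonneg ε) (by positivity)
            (pow_le_pow_left₀ (by positivity) (h.σ_mem _ hyε).1 2)
      _ = 4 / s ^ 2 / y ^ 2 := by field_simp; ring
  calc greenKernel b1 b2 σ ε w y
      ≤ 4 / s ^ 2 / y ^ 2 *
          exp (a / (8 * s ^ 2) * (1 / w - 1 / y) + 8 * b / s ^ 2 * log (w / y)) :=
        mul_le_mul hpre (exp_le_exp.2 (h.integral_driftRatio_le hε hy hyw hwε)) (exp_pos _).le
          (by positivity)
    _ = _ := by ring

theorem tendsto_mul_driftRatio (h : CoeffsNearZero b1 b2 σ a b s δ) (hu : 0 < u) :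
    Tendsto (fun ε => ε * driftRatio b1 b2 σ ε (u * ε)) (𝓝[>] 0)
      (𝓝 (a / s ^ 2 / u ^ 2 - b / s ^ 2 / u)) := by
  have hmul := tendsto_const_mul_nhdsGT_zero_s7 hu
  have hs := h.s_pos
  have hlim := ((h.tendsto_b1.comp hmul).sub ((h.tendsto_b2_div.comp hmul).const_mul u)).div
    (((h.tendsto_σ_div.comp hmul).pow 2).const_mul (u ^ 2)) (by positivity)
  rw [show a / s ^ 2 / u ^ 2 - b / s ^ 2 / u = (a - u * b) / (u ^ 2 * s ^ 2) by
    field_simp]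
  refine hlim.congr' ?_
  filter_upwards [self_mem_nhdsWithin] with ε (hε : 0 < ε)
  simp only [Function.comp_apply, Pi.div_apply, driftRatio]
  rcases eq_or_ne (σ (u * ε)) 0 with hσ | hσ
  · simp [hσ]
  · field_simp

theorem tendsto_sq_div_sigma_sq (h : CoeffsNearZero b1 b2 σ a b s δ) (hy : 0 < y) :
    Tendsto (fun ε => ε ^ 2 / σ (y * ε) ^ 2) (𝓝[>] 0) (𝓝 (1 / (y ^ 2 * s ^ 2))) := by
  have hs := h.s_pos
  have hlim := (((h.tendsto_σ_div.comp (tendsto_const_mul_nhdsGT_zero_s7 hy)).pow 2).const_mul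
    (y ^ 2)).inv₀ (by positivity)
  rw [one_div]
  refine hlim.congr' ?_
  filter_upwards [self_mem_nhdsWithin] with ε (hε : 0 < ε)
  simp only [Function.comp_apply]
  rcases eq_or_ne (σ (y * ε)) 0 with hσ | hσ
  · simp [hσ]
  · field_simp

theorem tendsto_integral_driftRatio (h : CoeffsNearZero b1 b2 σ a b s δ) (hw : 0 < w)
    (hy : 0 < y) :
    Tendsto (fun ε => ∫ l in (w * ε)..(y * ε), driftRatio b1 b2 σ ε l) (𝓝[>] 0)
      (𝓝 (a / s ^ 2 * (1 / w - 1 / y) + b / s ^ 2 * log (w / y))) := by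
  have hpos : uIcc w y ⊆ Ioc 0 (max w y) := fun u hu => ⟨(lt_min hw hy).trans_le hu.1, hu.2⟩
  have hsmall : Ioo 0 (δ / max w y) ∈ 𝓝[>] 0 :=
    Ioo_mem_nhdsGT (div_pos h.δ_pos (lt_max_of_lt_left hw))
  have hs := h.s_pos
  have ha := h.a_pos
  have hb := h.b_pos
  rw [← integral_div_sq_sub_div hw hy]
  have hsubst : ∀ ε, ∫ l in (w * ε)..(y * ε), driftRatio b1 b2 σ ε l =
      ∫ u in w..y, ε * driftRatio b1 b2 σ ε (u * ε) := fun ε => by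
    rw [← intervalIntegral.smul_integral_comp_mul_right, intervalIntegral.integral_const_mul,
      smul_eq_mul]
  simp_rw [hsubst]
  refine intervalIntegral.tendsto_integral_filter_of_dominated_convergence
    (fun u => 8 * (a + b * u) / (s ^ 2 * u ^ 2)) ?_ ?_ ?_
    (ae_of_all _ fun u hu => h.tendsto_mul_driftRatio (hpos (uIoc_subset_uIcc hu)).1)
  · filter_upwards [hsmall] with ε hε
    refine ContinuousOn.aestronglyMeasurable ?_ measurableSet_uIoc
    exact continuousOn_const.mul ((h.continuousOn_driftRatio ε).comp
      (continuousOn_id.mul continuousOn_const) fun u hu => mul_mem_Ioo_of_mem_Ioc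
        (hpos (uIoc_subset_uIcc hu)) hε)
  · filter_upwards [hsmall] with ε hε
    refine ae_of_all _ fun u hu => ?_
    have hu' := hpos (uIoc_subset_uIcc hu)
    have hu0 := hu'.1
    have hε0 := hε.1
    calc ‖ε * driftRatio b1 b2 σ ε (u * ε)‖ = ε * |driftRatio b1 b2 σ ε (u * ε)| := by
          rw [norm_mul, norm_of_nonneg hε0.le, Real.norm_eq_abs]
      _ ≤ ε * (8 * (a * ε + b * (u * ε)) / (s ^ 2 * (u * ε) ^ 2)) :=
          mul_le_mul_of_nonneg_left
            (h.abs_driftRatio_le hε0.le (mul_mem_Ioo_of_mem_Ioc hu' hε)) hε0.le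
      _ = 8 * (a + b * u) / (s ^ 2 * u ^ 2) := by field_simp
  · refine (ContinuousOn.div (by fun_prop) (by fun_prop) fun u hu => ?_).intervalIntegrable
    have hu0 := (hpos hu).1
    positivity

theorem tendsto_greenKernel (h : CoeffsNearZero b1 b2 σ a b s δ) (hw : 0 < w) (hy : 0 < y) :
    Tendsto (fun ε => greenKernel b1 b2 σ ε w y) (𝓝[>] 0)
      (𝓝 (limitKernel a b s w y / s ^ 2)) := by
  have hlim := (h.tendsto_sq_div_sigma_sq hy).mul
    ((continuous_exp.tendsto _).comp (h.tendsto_integral_driftRatio hw hy))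
  rwa [limitKernel_eq a b s hw hy, div_div, div_eq_inv_mul, ← one_div]

theorem greenKernel_eq_mul (h : CoeffsNearZero b1 b2 σ a b s δ) (hε : 0 < ε) :
    ∃ k g : ℝ → ℝ, ContinuousOn k (Ioo 0 (δ / ε)) ∧ ContinuousOn g (Ioo 0 (δ / ε)) ∧
      ∀ w ∈ Ioo 0 (δ / ε), ∀ y ∈ Ioo 0 (δ / ε), greenKernel b1 b2 σ ε w y = k w * g y := by
  set Φ := fun x => ∫ l in (δ / 2)..x, driftRatio b1 b2 σ ε l
  have hc : δ / 2 ∈ Ioo 0 δ := ⟨half_pos h.δ_pos, half_lt_self h.δ_pos⟩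
  have hmaps : MapsTo (· * ε) (Ioo 0 (δ / ε)) (Ioo 0 δ) :=
    fun u hu => ⟨mul_pos hu.1 hε, (lt_div_iff₀ hε).1 hu.2⟩
  have hscale : ContinuousOn (· * ε) (Ioo 0 (δ / ε)) := continuousOn_id.mul continuousOn_const
  have hΦ : ContinuousOn (fun u => Φ (u * ε)) (Ioo 0 (δ / ε)) :=
    ((h.continuousOn_driftRatio ε).intervalIntegral_primitive isOpen_Ioo ordConnected_Ioo
      hc).comp hscale hmaps
  have hint : ∀ x ∈ Ioo 0 δ, IntervalIntegrable (driftRatio b1 b2 σ ε) volume (δ / 2) x :=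
    fun x hx => ((h.continuousOn_driftRatio ε).mono
      (ordConnected_Ioo.uIcc_subset hc hx)).intervalIntegrable
  refine ⟨fun w => exp (-Φ (w * ε)), fun y => ε ^ 2 / σ (y * ε) ^ 2 * exp (Φ (y * ε)),
    continuous_exp.comp_continuousOn hΦ.neg,
    (continuousOn_const.div ((h.continuousOn_σ.comp hscale hmaps).pow 2)
      fun y hy => pow_ne_zero 2 (h.sigma_pos (hmaps hy)).ne').mul
      (continuous_exp.comp_continuousOn hΦ), fun w hw y hy => ?_⟩
  rw [greenKernel, ← intervalIntegral.integral_interval_sub_left (hint _ (hmaps hy))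
    (hint _ (hmaps hw)), sub_eq_neg_add, exp_add]
  ring

theorem tendsto_integral_integral_greenKernel (h : CoeffsNearZero b1 b2 σ a b s δ)
    {α β c d : ℝ} {p q : ℝ → ℝ} (hα : 0 < α) (hαβ : α ≤ β) (hcd : Ι c d ⊆ Ioc 0 β)
    (hp : ContinuousOn p (Ι c d)) (hq : ContinuousOn q (Ι c d))
    (hpβ : MapsTo p (Ι c d) (Ioc 0 β)) (hqβ : MapsTo q (Ι c d) (Ioc 0 β))
    (hregion : ∀ y ∈ Ι c d, ∀ w ∈ Ι (p y) (q y), y ≤ w ∧ α ≤ w) :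
    Tendsto (fun ε => ∫ y in c..d, ∫ w in p y..q y, greenKernel b1 b2 σ ε w y) (𝓝[>] 0)
      (𝓝 ((∫ y in c..d, ∫ w in p y..q y, limitKernel a b s w y) / s ^ 2)) := by
  have hs := h.s_pos
  have hβ : 0 < β := hα.trans_le hαβ
  have hpq : ∀ y ∈ Ι c d, uIcc (p y) (q y) ⊆ Ioc 0 β :=
    fun y hy => ordConnected_Ioc.uIcc_subset (hpβ hy) (hqβ hy)
  have hS : ∀ ε ∈ Ioo 0 (δ / β), Ioc 0 β ⊆ Ioo 0 (δ / ε) :=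
    fun ε hε u hu => ⟨hu.1, (lt_div_iff₀ hε.1).2 (mul_mem_Ioo_of_mem_Ioc hu hε).2⟩
  obtain ⟨C, hC0, hC⟩ := exists_exp_inv_sub_inv_add_log_div_sq_le (c := 8 * b / s ^ 2)
    (by have := h.a_pos; positivity : 0 < a / (8 * s ^ 2)) hα hαβ
  simp_rw [← intervalIntegral.integral_div]
  refine tendsto_integral_integral_of_bounded (C := 4 / s ^ 2 * C) (L := β) (by positivity)
    ?_ ?_ ?_ (fun y hy => ?_) fun y hy w hw => h.tendsto_greenKernel
      (hpq y hy (uIoc_subset_uIcc hw)).1 (hcd hy).1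
  · filter_upwards [Ioo_mem_nhdsGT (div_pos h.δ_pos hβ)] with ε hε y hy
    obtain ⟨k, g, hk, -, hkg⟩ := h.greenKernel_eq_mul hε.1
    refine ContinuousOn.aestronglyMeasurable ?_ measurableSet_uIoc
    exact ((hk.mul continuousOn_const).congr fun w hw => hkg w hw y (hS ε hε (hcd hy))).mono
      (uIoc_subset_uIcc.trans ((hpq y hy).trans (hS ε hε)))
  · filter_upwards [Ioo_mem_nhdsGT (div_pos h.δ_pos hβ)] with ε hε
    obtain ⟨k, g, hk, hg, hkg⟩ := h.greenKernel_eq_mul hε.1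
    refine ContinuousOn.aestronglyMeasurable ?_ measurableSet_uIoc
    refine (continuousOn_intervalIntegral_mul isOpen_Ioo ordConnected_Ioo hk
      (hg.mono (hcd.trans (hS ε hε))) hp hq (fun y hy => hS ε hε (hpβ hy))
      (fun y hy => hS ε hε (hqβ hy))).congr fun y hy => intervalIntegral.integral_congr
        fun w hw => hkg w (hS ε hε (hpq y hy hw)) y (hS ε hε (hcd hy))
  · filter_upwards [Ioo_mem_nhdsGT (div_pos h.δ_pos hβ)] with ε hε y hy w hw
    obtain ⟨hyw, hαw⟩ := hregion y hy w hw
    have hw' := hpq y hy (uIoc_subset_uIcc hw)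
    rw [Real.norm_eq_abs, abs_of_nonneg (greenKernel_nonneg _ _ _ _ _ _)]
    exact (h.greenKernel_le hε.1 (hcd hy).1 hyw (mul_mem_Ioo_of_mem_Ioc hw' hε).2).trans
      (mul_le_mul_of_nonneg_left (hC w y (hcd hy).1 hyw hαw hw'.2) (by positivity))
  · rw [abs_sub_le_iff]
    constructor <;> linarith [(hpβ hy).1, (hpβ hy).2, (hqβ hy).1, (hqβ hy).2]

end CoeffsNearZero

theorem statement7_general
    (b1 b2 σ : ℝ → ℝ)
    (hb1 : ContDiffOn ℝ 1 b1 (Ici 0))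
    (hb1inf : ∃ m > 0, ∀ x ∈ Ici (0 : ℝ), m ≤ b1 x)
    (hb2 : ContDiffOn ℝ 2 b2 (Ici 0))
    (hb20 : b2 0 = 0)
    (hσ : ContDiffOn ℝ 2 σ (Ici 0))
    (hσzero : ∀ x ∈ Ici (0 : ℝ), (σ x = 0 ↔ x = 0))
    (a b s : ℝ)
    (ha : a = b1 0)
    (hb : b = derivWithin b2 (Ici 0) 0) (hbpos : 0 < b)
    (hs : s = derivWithin σ (Ici 0) 0) (hspos : 0 < s)
    (α β : ℝ) (hα : 0 < α) (hαβ : α < β)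
    (hε : ℝ → ℝ → ℝ → ℝ)
    (hεdef : ∀ ε w y : ℝ, hε ε w y =
      ε ^ 2 / σ (y * ε) ^ 2 *
        Real.exp (∫ l in (w * ε)..(y * ε), (ε * b1 l - b2 l) / σ l ^ 2))
    (H : ℝ → ℝ → ℝ)
    (Hdef : ∀ w y : ℝ, H w y =
      Real.exp (a / s ^ 2 * (1 / w - 1 / y)) * w ^ (b / s ^ 2) / y ^ (b / s ^ 2 + 2)) :
    Tendsto
      (fun ε : ℝ =>
        2 * ((∫ y in (0 : ℝ)..α, ∫ w in α..β, hε ε w y) +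
          (∫ y in α..β, ∫ w in y..β, hε ε w y)))
      (𝓝[>] (0 : ℝ))
      (𝓝 (2 / s ^ 2 * ((∫ y in (0 : ℝ)..α, ∫ w in α..β, H w y) +
        (∫ y in α..β, ∫ w in y..β, H w y)))) ∧
    0 < 2 / s ^ 2 * ((∫ y in (0 : ℝ)..α, ∫ w in α..β, H w y) +
        (∫ y in α..β, ∫ w in y..β, H w y)) := by
  obtain ⟨m, hm, hmb1⟩ := hb1inf
  obtain rfl : hε = greenKernel b1 b2 σ := funext fun ε => funext fun w => funext (hεdef ε w)
  obtain rfl : H = limitKernel a b s := funext fun w => funext (Hdef w)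
  subst ha hb hs
  obtain ⟨δ, hδ⟩ := exists_coeffsNearZero hb1.continuousOn (hb2.differentiableOn (by norm_num))
    (hσ.differentiableOn (by norm_num)) hb20 ((hσzero 0 self_mem_Ici).2 rfl)
    (hm.trans_le (hmb1 0 self_mem_Ici)) hbpos hspos
  have hβ : 0 < β := hα.trans hαβ
  have hleft := hδ.tendsto_integral_integral_greenKernel (c := 0) (d := α) (p := fun _ => α)
    (q := fun _ => β) hα hαβ.le (by rw [uIoc_of_le hα.le]; exact Ioc_subset_Ioc_right hαβ.le)
    continuousOn_const continuousOn_const (fun _ _ => ⟨hα, hαβ.le⟩) (fun _ _ => ⟨hβ, le_rfl⟩)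
    fun y hy w hw => by
      rw [uIoc_of_le hα.le] at hy
      rw [uIoc_of_le hαβ.le] at hw
      exact ⟨hy.2.trans hw.1.le, hw.1.le⟩
  have hIαβ : Ι α β ⊆ Ioc 0 β := by
    rw [uIoc_of_le hαβ.le]; exact Ioc_subset_Ioc_left hα.le
  have hright := hδ.tendsto_integral_integral_greenKernel (c := α) (d := β) (p := fun y => y)
    (q := fun _ => β) hα hαβ.le hIαβ continuousOn_id continuousOn_const
    (fun _ hy => hIαβ hy) (fun _ _ => ⟨hβ, le_rfl⟩)
    fun y hy w hw => by
      rw [uIoc_of_le hαβ.le] at hy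
      rw [uIoc_of_le hy.2] at hw
      exact ⟨hw.1.le, hy.1.le.trans hw.1.le⟩
  refine ⟨?_, mul_pos (by positivity) (integral_integral_limitKernel_pos _ _ _ hα hαβ)⟩
  convert (hleft.add hright).const_mul 2 using 2
  ring

/-- (Analytic core of Proposition 4.4: limit of the expected upcrossing time via the Green
kernel.) Let `0 < α < β`, `h_ε(w,y) := (ε²/σ(yε)²)·exp(∫_{wε}^{yε} (ε·b₁ − b₂)/σ² dl)` and
`H(w,y) := e^{(a/s²)(1/w − 1/y)}·w^{b/s²}/y^{b/s²+2}`. Then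
`lim_{ε→0⁺} 2·[∫_0^α ∫_α^β h_ε + ∫_α^β ∫_y^β h_ε]
  = (2/s²)·[∫_0^α ∫_α^β H + ∫_α^β ∫_y^β H]`, and this limit is finite and positive. -/
theorem statement7
    (b1 b2 σ : ℝ → ℝ)
    (hb1 : ContDiffOn ℝ 1 b1 (Ici 0))
    (hb1inf : ∃ m > 0, ∀ x ∈ Ici (0 : ℝ), m ≤ b1 x)
    (hb1sup : ∃ M : ℝ, ∀ x ∈ Ici (0 : ℝ), b1 x ≤ M)
    (hb2 : ContDiffOn ℝ 2 b2 (Ici 0))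
    (hb2nonneg : ∀ x ∈ Ici (0 : ℝ), 0 ≤ b2 x)
    (hb20 : b2 0 = 0)
    (hσ : ContDiffOn ℝ 2 σ (Ici 0))
    (hσnonneg : ∀ x ∈ Ici (0 : ℝ), 0 ≤ σ x)
    (hσzero : ∀ x ∈ Ici (0 : ℝ), (σ x = 0 ↔ x = 0))
    (a b s : ℝ)
    (ha : a = b1 0)
    (hb : b = derivWithin b2 (Ici 0) 0) (hbpos : 0 < b)
    (hs : s = derivWithin σ (Ici 0) 0) (hspos : 0 < s)
    (α β : ℝ) (hα : 0 < α) (hαβ : α < β)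
    (hε : ℝ → ℝ → ℝ → ℝ)
    (hεdef : ∀ ε w y : ℝ, hε ε w y =
      ε ^ 2 / σ (y * ε) ^ 2 *
        Real.exp (∫ l in (w * ε)..(y * ε), (ε * b1 l - b2 l) / σ l ^ 2))
    (H : ℝ → ℝ → ℝ)
    (Hdef : ∀ w y : ℝ, H w y =
      Real.exp (a / s ^ 2 * (1 / w - 1 / y)) * w ^ (b / s ^ 2) / y ^ (b / s ^ 2 + 2)) :
    Tendsto
      (fun ε : ℝ =>
        2 * ((∫ y in (0 : ℝ)..α, ∫ w in α..β, hε ε w y) +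
          (∫ y in α..β, ∫ w in y..β, hε ε w y)))
      (𝓝[>] (0 : ℝ))
      (𝓝 (2 / s ^ 2 * ((∫ y in (0 : ℝ)..α, ∫ w in α..β, H w y) +
        (∫ y in α..β, ∫ w in y..β, H w y)))) ∧
    0 < 2 / s ^ 2 * ((∫ y in (0 : ℝ)..α, ∫ w in α..β, H w y) +
        (∫ y in α..β, ∫ w in y..β, H w y)) :=
  statement7_general b1 b2 σ hb1 hb1inf hb2 hb20 hσ hσzero a b s ha hb hbpos hs hspos α β hα hαβ hε
    hεdef H Hdef
end

section
/- (Lower Taylor bound, inequality (4.15).) For every b > 0 and every x ≥ 1/b one has 1/(3x³) − b/(2x²) ≥ −b³/6 + (b⁵/2)·(x − 1/b)² − (4b⁶/3)·(x − 1/b)³. -/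
/-!
Write `x = (1 + t) / b`. Multiplied by `6 x³`, the difference of the two sides is the polynomial
`15 t⁴ + 21 t⁵ + 8 t⁶` in `t = b x - 1`: the Taylor polynomial at `1 / b` agrees with the
left-hand side to third order, and every remaining coefficient is positive, so the difference
is nonnegative as soon as `t ≥ 0`, i.e. `x ≥ 1 / b`.
-/

lemma lowerTaylor_sub_eq {b x : ℝ} (hb : b ≠ 0) (hx : x ≠ 0) :
    1 / (3 * x ^ 3) - b / (2 * x ^ 2) -
        (-b ^ 3 / 6 + b ^ 5 / 2 * (x - 1 / b) ^ 2 - 4 * b ^ 6 / 3 * (x - 1 / b) ^ 3) =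
      (15 * (b * x - 1) ^ 4 + 21 * (b * x - 1) ^ 5 + 8 * (b * x - 1) ^ 6) / (6 * x ^ 3) := by
  field_simp
  ring

/-- (Lower Taylor bound, inequality (4.15).) For every `b > 0` and every `x ≥ 1/b` one has
`1/(3x³) − b/(2x²) ≥ −b³/6 + (b⁵/2)·(x − 1/b)² − (4b⁶/3)·(x − 1/b)³`. -/
theorem statement9 (b x : ℝ) (hb : 0 < b) (hx : 1 / b ≤ x) :
    1 / (3 * x ^ 3) - b / (2 * x ^ 2) ≥
      -b ^ 3 / 6 + b ^ 5 / 2 * (x - 1 / b) ^ 2 - 4 * b ^ 6 / 3 * (x - 1 / b) ^ 3 := by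
  have hx0 : 0 < x := (one_div_pos.mpr hb).trans_le hx
  have ht : 0 ≤ b * x - 1 := by
    rw [div_le_iff₀ hb] at hx
    linarith
  rw [ge_iff_le, ← sub_nonneg, lowerTaylor_sub_eq hb.ne' hx0.ne']
  positivity
end

section
/- (Laplace-type asymptotics of the scale integral, equation (4.17).) For every b > 0 and every l > 0 one has lim_{ε→0⁺} [ ∫_{1/b}^{1/b + lε} exp( (1/ε²)·(1/(3x³) − b/(2x²)) ) dx ] / [ ε·e^{−b³/(6ε²)}·∫_0^l e^{(b⁵/2)x²} dx ] = 1. -/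
/-! Substituting `x = 1/b + ε u` turns the integral into `ε e^{-b³/(6ε²)} ∫₀^l exp (q(ε u) u²) du`,
because `f (1/b + t) = f (1/b) + q(t) t²` exactly (`f = scaleExponent b`, `q = scaleQuadraticCoeff b`),
with `f (1/b) = -b³/6` and `q(0) = b⁵/2`.
Since `q(t) ≤ q(0)` for `t ≥ 0`, the limiting integrand `exp (q(0) u²)` dominates, and dominated
convergence gives the limit. -/

open MeasureTheory Real Set Filter
open scoped Topology

theorem tendsto_intervalIntegral_exp_mul_sq_comp_mul {g : ℝ → ℝ} (hgm : Measurable g)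
    (hg : ContinuousAt g 0) (hle : ∀ t, 0 ≤ t → g t ≤ g 0) {l : ℝ} (hl : 0 ≤ l) :
    Tendsto (fun ε => ∫ u in (0 : ℝ)..l, exp (g (ε * u) * u ^ 2)) (𝓝[≥] 0)
      (𝓝 (∫ u in (0 : ℝ)..l, exp (g 0 * u ^ 2))) := by
  refine intervalIntegral.tendsto_integral_filter_of_dominated_convergence
    (fun u => exp (g 0 * u ^ 2)) (.of_forall fun ε => by fun_prop) ?_
    ((by fun_prop : Continuous fun u : ℝ => exp (g 0 * u ^ 2)).intervalIntegrable _ _) ?_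
  · filter_upwards [self_mem_nhdsWithin] with ε (hε : 0 ≤ ε)
    refine .of_forall fun u hu => ?_
    rw [uIoc_of_le hl] at hu
    rw [norm_of_nonneg (exp_pos _).le, exp_le_exp]
    gcongr
    exact hle _ (mul_nonneg hε hu.1.le)
  · refine .of_forall fun u _ => ?_
    have hεu : Tendsto (fun ε : ℝ => ε * u) (𝓝[≥] 0) (𝓝 0) := by
      simpa using (tendsto_id.mul_const u).mono_left (nhdsWithin_le_nhds (a := (0:ℝ)))
    exact ((hg.tendsto.comp hεu).mul_const _).rexp

noncomputable def scaleExponent (b x : ℝ) : ℝ := 1 / (3 * x ^ 3) - b / (2 * x ^ 2)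

noncomputable def scaleQuadraticCoeff (b t : ℝ) : ℝ := b ^ 5 * (3 + b * t) / (6 * (1 + b * t) ^ 3)

theorem scaleExponent_inv_add {b t : ℝ} (hb : b ≠ 0) (hbt : 1 + b * t ≠ 0) :
    scaleExponent b (1 / b + t) = -b ^ 3 / 6 + scaleQuadraticCoeff b t * t ^ 2 := by
  have hx : 1 / b + t ≠ 0 := by
    rw [div_add' _ _ _ hb]; exact div_ne_zero (by rwa [mul_comm]) hb
  unfold scaleExponent scaleQuadraticCoeff
  field_simp
  ring

theorem scaleQuadraticCoeff_zero (b : ℝ) : scaleQuadraticCoeff b 0 = b ^ 5 / 2 := by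
  unfold scaleQuadraticCoeff; ring

theorem scaleQuadraticCoeff_le_scaleQuadraticCoeff_zero {b t : ℝ} (hb : 0 ≤ b) (ht : 0 ≤ t) :
    scaleQuadraticCoeff b t ≤ scaleQuadraticCoeff b 0 := by
  have hs : 0 ≤ b * t := mul_nonneg hb ht
  rw [scaleQuadraticCoeff_zero]
  unfold scaleQuadraticCoeff
  rw [div_le_iff₀ (by positivity)]
  have : 3 + b * t ≤ 3 * (1 + b * t) ^ 3 := by nlinarith [pow_nonneg hs 2, pow_nonneg hs 3]
  nlinarith [pow_nonneg hb 5]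

theorem continuousAt_scaleQuadraticCoeff_zero (b : ℝ) : ContinuousAt (scaleQuadraticCoeff b) 0 := by
  unfold scaleQuadraticCoeff
  exact ContinuousAt.div (by fun_prop) (by fun_prop) (by simp)

theorem measurable_scaleQuadraticCoeff (b : ℝ) : Measurable (scaleQuadraticCoeff b) := by
  unfold scaleQuadraticCoeff
  fun_prop

theorem integral_exp_scaleExponent {b ε : ℝ} (hb : 0 < b) (hε : 0 < ε) {l : ℝ} (hl : 0 ≤ l) :
    ∫ x in (1 / b)..(1 / b + l * ε), exp (1 / ε ^ 2 * scaleExponent b x) =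
      ε * exp (-b ^ 3 / (6 * ε ^ 2)) *
        ∫ u in (0 : ℝ)..l, exp (scaleQuadraticCoeff b (ε * u) * u ^ 2) := by
  have hsub := intervalIntegral.smul_integral_comp_add_mul
    (f := fun x : ℝ => exp (1 / ε ^ 2 * scaleExponent b x)) (a := 0) (b := l) ε (1 / b)
  rw [smul_eq_mul, mul_zero, add_zero, mul_comm ε l] at hsub
  rw [← hsub, mul_assoc]
  congr 1
  rw [← intervalIntegral.integral_const_mul]
  refine intervalIntegral.integral_congr ?_
  intro u hu
  rw [uIcc_of_le hl] at hu
  have hbt : 1 + b * (ε * u) ≠ 0 := by have := hu.1; positivity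
  dsimp only
  rw [← exp_add, scaleExponent_inv_add hb.ne' hbt]
  congr 1
  field_simp

/-- (Laplace-type asymptotics of the scale integral, equation (4.17).) For every `b > 0` and
`l > 0`:
`lim_{ε→0⁺} [∫_{1/b}^{1/b+lε} exp((1/ε²)(1/(3x³) − b/(2x²))) dx] /
  [ε·e^{−b³/(6ε²)}·∫_0^l e^{(b⁵/2)x²} dx] = 1`. -/
theorem statement10 (b l : ℝ) (hb : 0 < b) (hl : 0 < l) :
    Tendsto
      (fun ε : ℝ =>
        (∫ x in (1 / b)..(1 / b + l * ε),
            Real.exp (1 / ε ^ 2 * (1 / (3 * x ^ 3) - b / (2 * x ^ 2)))) /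
          (ε * Real.exp (-b ^ 3 / (6 * ε ^ 2)) *
            ∫ x in (0 : ℝ)..l, Real.exp (b ^ 5 / 2 * x ^ 2)))
      (𝓝[>] (0 : ℝ)) (𝓝 1) := by
  set I := ∫ x in (0 : ℝ)..l, exp (b ^ 5 / 2 * x ^ 2)
  have hI : 0 < I := intervalIntegral.intervalIntegral_pos_of_pos_on
    ((by fun_prop : Continuous fun x : ℝ => exp (b ^ 5 / 2 * x ^ 2)).intervalIntegrable _ _)
    (fun _ _ => exp_pos _) hl
  have hlim := tendsto_intervalIntegral_exp_mul_sq_comp_mul (measurable_scaleQuadraticCoeff b)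
    (continuousAt_scaleQuadraticCoeff_zero b) (fun _ => scaleQuadraticCoeff_le_scaleQuadraticCoeff_zero hb.le) hl.le
  rw [scaleQuadraticCoeff_zero] at hlim
  have hratio := (hlim.mono_left (nhdsWithin_mono _ Ioi_subset_Ici_self)).div_const I
  rw [div_self hI.ne'] at hratio
  refine hratio.congr' ?_
  filter_upwards [self_mem_nhdsWithin] with ε (hε : 0 < ε)
  have h := integral_exp_scaleExponent hb hε hl.le
  unfold scaleExponent at h
  rw [h, mul_div_mul_left _ _ (by positivity)]
end

section
/- (Limit of the denominator scale integral for the Rabi model.) For all b > 0 and z > 0 one has lim_{ε→0⁺} ∫_{ε/b}^z exp( ε/(3x³) − b/(2x²) ) dx = ∫_0^z e^{−b/(2x²)} dx. -/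
open MeasureTheory Real Set Filter
open scoped Topology

/-- (Limit of the denominator scale integral for the Rabi model.) For all `b > 0` and `z > 0`:
`lim_{ε→0⁺} ∫_{ε/b}^z exp(ε/(3x³) − b/(2x²)) dx = ∫_0^z e^{−b/(2x²)} dx`. -/
theorem statement11 (b z : ℝ) (hb : 0 < b) (hz : 0 < z) :
    Tendsto
      (fun ε : ℝ => ∫ x in (ε / b)..z, Real.exp (ε / (3 * x ^ 3) - b / (2 * x ^ 2)))
      (𝓝[>] (0 : ℝ))
      (𝓝 (∫ x in (0 : ℝ)..z, Real.exp (-(b / (2 * x ^ 2))))) := by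
  have h0z : (0:ℝ) ≤ z := hz.le
  rw [intervalIntegral.integral_of_le h0z]
  set F : ℝ → ℝ → ℝ := fun ε x =>
    (Ioi (ε / b)).indicator (fun x => Real.exp (ε / (3 * x ^ 3) - b / (2 * x ^ 2))) x with hF
  have key : Tendsto (fun ε => ∫ x in Ioc 0 z, F ε x) (𝓝[>] (0:ℝ))
      (𝓝 (∫ x in Ioc 0 z, Real.exp (-(b / (2 * x ^ 2))))) := by
    apply MeasureTheory.tendsto_integral_filter_of_dominated_convergence (fun _ => (1:ℝ))
    · filter_upwards with ε
      exact ((Measurable.indicator (by fun_prop) measurableSet_Ioi)).aestronglyMeasurable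
    · filter_upwards [self_mem_nhdsWithin] with ε hε
      have hε0 : 0 < ε := hε
      filter_upwards [ae_restrict_mem measurableSet_Ioc] with x hx
      have hx0 : 0 < x := hx.1
      by_cases hmem : x ∈ Ioi (ε / b)
      · rw [hF]
        simp only [indicator_of_mem hmem]
        rw [Real.norm_eq_abs, abs_of_pos (Real.exp_pos _)]
        rw [Real.exp_le_one_iff]
        have hεbx : ε ≤ b * x := by
          have := hmem
          rw [mem_Ioi, div_lt_iff₀ hb] at this
          linarith [this]
        have h1 : ε / (3 * x ^ 3) ≤ b / (3 * x ^ 2) := by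
          rw [div_le_div_iff₀ (by positivity) (by positivity)]
          nlinarith [pow_pos hx0 2, pow_pos hx0 3]
        have h2 : b / (3 * x ^ 2) ≤ b / (2 * x ^ 2) := by
          apply div_le_div_of_nonneg_left hb.le (by positivity)
          nlinarith [pow_pos hx0 2]
        linarith
      · rw [hF]
        simp only [indicator_of_notMem hmem]
        simp
    · exact MeasureTheory.integrable_const 1
    · filter_upwards [ae_restrict_mem measurableSet_Ioc] with x hx
      have hx0 : 0 < x := hx.1
      have hev : ∀ᶠ ε in 𝓝[>] (0:ℝ),
          Real.exp (ε / (3 * x ^ 3) - b / (2 * x ^ 2)) = F ε x := by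
        filter_upwards [Ioo_mem_nhdsGT_of_mem (by constructor <;> [rfl; exact mul_pos hb hx0] : (0:ℝ) ∈ Ico 0 (b * x))] with ε hε
        have : x ∈ Ioi (ε / b) := by
          rw [mem_Ioi, div_lt_iff₀ hb]
          linarith [hε.2]
        rw [hF]
        simp only [indicator_of_mem this]
      refine Tendsto.congr' hev ?_
      have hc : ContinuousAt (fun ε : ℝ => Real.exp (ε / (3 * x ^ 3) - b / (2 * x ^ 2))) 0 := by
        fun_prop
      have := tendsto_nhdsWithin_of_tendsto_nhds (s := Ioi (0:ℝ)) hc.tendsto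
      simpa using this
  refine key.congr' ?_
  filter_upwards [Ioo_mem_nhdsGT_of_mem (by constructor <;> [rfl; exact mul_pos hb hz] : (0:ℝ) ∈ Ico 0 (b * z))] with ε hε
  have hεb0 : 0 < ε / b := div_pos hε.1 hb
  have hεbz : ε / b ≤ z := by
    rw [div_le_iff₀ hb]
    linarith [hε.2]
  rw [hF]
  rw [MeasureTheory.integral_indicator measurableSet_Ioi,
    Measure.restrict_restrict measurableSet_Ioi,
    intervalIntegral.integral_of_le hεbz]
  have hset : Ioi (ε / b) ∩ Ioc 0 z = Ioc (ε / b) z := by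
    rw [inter_comm, Set.Ioc_inter_Ioi, sup_eq_right.mpr hεb0.le]
  rw [hset]
end

section
/- (Analytic core of Proposition 4.12: limit of the expected upcrossing time in the Rabi model, equation (4.19).) For every b > 0 one has lim_{ε→0⁺} (2/ε²)·[ ∫_0^{1/b} ∫_{1/b}^{1/b+ε} y^{−4}·e^{(f(w) − f(y))/ε²} dw dy + ∫_{1/b}^{1/b+ε} ∫_y^{1/b+ε} y^{−4}·e^{(f(w) − f(y))/ε²} dw dy ] = 2b⁴·∫_0^∞ ∫_0^1 e^{(b⁵/2)(w² − y²)} dw dy + 2b⁴·∫_0^1 ∫_y^1 e^{(b⁵/2)(w² − y²)} dw dy, and this limit is finite. (The left-hand side equals the expected hitting time E_{ε/b}[T_{ε/b+ε²}] of level ε/b + ε² for the diffusion with λ = 1 started at ε/b.) -/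
open MeasureTheory Real Set Filter
open scoped Topology

open intervalIntegral

noncomputable def phi (b u : ℝ) : ℝ := b^2*(3+b*u) / (6*(1/b+u)^3)

theorem phi_zero {b : ℝ} (hb : 0 < b) : phi b 0 = b^5/2 := by
  unfold phi; field_simp; ring

theorem key_id {b : ℝ} (hb : 0 < b) (f : ℝ → ℝ)
    (hf : ∀ x : ℝ, f x = 1 / (3 * x ^ 3) - b / (2 * x ^ 2)) {u : ℝ} (hu : 0 < 1/b + u) :
    f (1/b + u) - f (1/b) = u^2 * phi b u := by
  rw [hf, hf]; unfold phi
  have h1 : (1/b + u) ≠ 0 := ne_of_gt hu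
  have h2 : b ≠ 0 := ne_of_gt hb
  set x := 1/b + u with hxdef
  have hu' : u = x - 1/b := by rw [hxdef]; ring
  rw [hu']
  field_simp
  ring

theorem phi_le {b : ℝ} (hb : 0 < b) {u : ℝ} (hu : 0 ≤ u) : phi b u ≤ b^5/2 := by
  unfold phi
  have hx : (0:ℝ) < 1/b + u := by positivity
  rw [div_le_div_iff₀ (by positivity) (by norm_num)]
  have h2 : b ≠ 0 := ne_of_gt hb
  have key : b^2*(3+b*u) * 2 ≤ b^5 * (6*(1/b+u)^3) := by
    have expand : b^5 * (6*(1/b+u)^3) = 6*b^2*(1+b*u)^3 := by field_simp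
    rw [expand]
    nlinarith [mul_nonneg (mul_nonneg hb.le hb.le) hu, sq_nonneg (b*u), mul_nonneg (mul_nonneg hu hu) hu, pow_pos hb 2, mul_nonneg (mul_nonneg (mul_nonneg hb.le hb.le) hb.le) hu]
  linarith

theorem phi_nonneg {b : ℝ} (hb : 0 < b) {u : ℝ} (hu : 0 ≤ u) : 0 ≤ phi b u := by
  unfold phi; positivity

theorem phi_ge {b : ℝ} (hb : 0 < b) {u : ℝ} (hu1 : -(1/b) < u) (hu2 : u ≤ 0) :
    b^5/2 ≤ phi b u := by
  unfold phi
  have hx : (0:ℝ) < 1/b + u := by linarith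
  rw [div_le_div_iff₀ (by norm_num) (by positivity)]
  have h2 : b ≠ 0 := ne_of_gt hb
  have key : b^5 * (6*(1/b+u)^3) ≤ b^2*(3+b*u) * 2 := by
    have expand : b^5 * (6*(1/b+u)^3) = 6*b^2*(1+b*u)^3 := by field_simp
    rw [expand]
    have hv : b*u ≤ 0 := mul_nonpos_of_nonneg_of_nonpos hb.le hu2
    have hv2 : (-1:ℝ) < b*u := by
      have := (mul_lt_mul_iff_right₀ hb).2 hu1
      rw [mul_neg, mul_one_div, div_self h2] at this; linarith
    have hq : 0 ≤ 3*(b*u)^2 + 9*(b*u) + 8 := by nlinarith [sq_nonneg (2*(b*u)+3)]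
    have h6 : 6*(1+b*u)^3 ≤ 6 + 2*(b*u) := by nlinarith [mul_nonneg (neg_nonneg.2 hv) hq]
    nlinarith [mul_le_mul_of_nonneg_left h6 (sq_nonneg b)]
  linarith

theorem phi_contAt {b : ℝ} (hb : 0 < b) {u0 : ℝ} (h : 1/b + u0 ≠ 0) :
    ContinuousAt (phi b) u0 := by
  unfold phi
  exact (continuousAt_const.mul (continuousAt_const.add (continuousAt_const.mul continuousAt_id))).div
    (continuousAt_const.mul ((continuousAt_const.add continuousAt_id).pow 3)) (by positivity)

noncomputable def gg (b ε t : ℝ) : ℝ := Real.exp (t^2 * phi b (ε*t))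
noncomputable def qq (b ε s : ℝ) : ℝ := 1/(1/b - ε*s)^4 * Real.exp (-(s^2 * phi b (-(ε*s))))
noncomputable def rr (b ε s : ℝ) : ℝ := 1/(1/b + ε*s)^4 * Real.exp (-(s^2 * phi b (ε*s)))


theorem subG {b : ℝ} (hb : 0 < b) (f : ℝ → ℝ)
    (hf : ∀ x : ℝ, f x = 1 / (3 * x ^ 3) - b / (2 * x ^ 2)) {ε : ℝ} (hε : 0 < ε)
    {s : ℝ} (hs : 0 ≤ s) :
    ∫ w in (1/b + ε*s)..(1/b + ε), Real.exp ((f w - f (1/b))/ε^2)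
      = ε * ∫ t in s..1, gg b ε t := by
  have h1 : (∫ t in s..(1:ℝ), (fun w => Real.exp ((f w - f (1/b))/ε^2)) (ε * t + 1/b))
      = ε⁻¹ • ∫ x in (ε*s + 1/b)..(ε*1 + 1/b), Real.exp ((f x - f (1/b))/ε^2) :=
    integral_comp_mul_add (fun w => Real.exp ((f w - f (1/b))/ε^2)) (ne_of_gt hε) (1/b)
  have h2 : (∫ t in s..(1:ℝ), (fun w => Real.exp ((f w - f (1/b))/ε^2)) (ε * t + 1/b))
      = ∫ t in s..(1:ℝ), gg b ε t := by
    apply integral_congr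
    intro t ht
    rcases le_total s 1 with hs1 | hs1
    · rw [uIcc_of_le hs1] at ht
      have ht0 : 0 ≤ t := le_trans hs ht.1
      have hu : 0 < 1/b + ε*t := by positivity
      simp only
      rw [show ε * t + 1/b = 1/b + ε*t by ring, key_id hb f hf hu]
      unfold gg
      congr 1
      field_simp
    · rw [uIcc_of_ge hs1] at ht
      have ht0 : 0 ≤ t := le_trans zero_le_one ht.1
      have hu : 0 < 1/b + ε*t := by positivity
      simp only
      rw [show ε * t + 1/b = 1/b + ε*t by ring, key_id hb f hf hu]
      unfold gg
      congr 1
      field_simp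
  rw [h2] at h1
  rw [show (1/b + ε*s) = ε*s + 1/b by ring, show (1/b + ε) = ε*1 + 1/b by ring]
  rw [h1, smul_eq_mul, ← mul_assoc, mul_inv_cancel₀ (ne_of_gt hε), one_mul]

theorem subP {b : ℝ} (hb : 0 < b) (f : ℝ → ℝ)
    (hf : ∀ x : ℝ, f x = 1 / (3 * x ^ 3) - b / (2 * x ^ 2)) {ε : ℝ} (hε : 0 < ε) :
    ∫ y in (0:ℝ)..(1/b), 1/y^4 * Real.exp (-((f y - f (1/b))/ε^2))
      = ε * ∫ s in (0:ℝ)..(1/(b*ε)), qq b ε s := by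
  set M := 1/(b*ε) with hM
  have hM0 : 0 < M := by positivity
  have hεM : -ε * M + 1/b = 0 := by rw [hM]; field_simp; ring
  have h1 : (∫ s in (0:ℝ)..M, (fun y => 1/y^4 * Real.exp (-((f y - f (1/b))/ε^2))) (-ε * s + 1/b))
      = (-ε)⁻¹ • ∫ x in (-ε*0 + 1/b)..(-ε*M + 1/b), 1/x^4 * Real.exp (-((f x - f (1/b))/ε^2)) :=
    integral_comp_mul_add (fun y => 1/y^4 * Real.exp (-((f y - f (1/b))/ε^2))) (by linarith : -ε ≠ 0) (1/b)
  rw [hεM, show -ε*0 + 1/b = 1/b by ring] at h1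
  have h2 : (∫ s in (0:ℝ)..M, (fun y => 1/y^4 * Real.exp (-((f y - f (1/b))/ε^2))) (-ε * s + 1/b))
      = ∫ s in (0:ℝ)..M, qq b ε s := by
    apply integral_congr
    intro s hsm
    rw [uIcc_of_le hM0.le] at hsm
    simp only
    rcases lt_or_eq_of_le hsm.2 with hlt | heq
    · have hy : 0 < 1/b + -(ε*s) := by
        have : ε * s < ε * M := by exact (mul_lt_mul_iff_right₀ hε).2 hlt
        rw [hM] at this
        have : ε * s < 1/b := by
          calc ε * s < ε * (1/(b*ε)) := this
          _ = 1/b := by field_simp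
        linarith
      rw [show -ε*s + 1/b = 1/b + -(ε*s) by ring, key_id hb f hf hy]
      unfold qq
      rw [show (1/b + -(ε*s)) = 1/b - ε*s by ring]
      congr 2
      field_simp
    · rw [← heq] at hεM
      rw [show -ε*s + 1/b = 0 from hεM]
      unfold qq
      rw [show (1/b - ε*s) = 0 by linarith [hεM]]
      norm_num
  rw [h2, integral_symm (0:ℝ) (1/b)] at h1
  have hne : ε ≠ 0 := ne_of_gt hε
  have hfin : ε * (∫ s in (0:ℝ)..M, qq b ε s)
      = ∫ y in (0:ℝ)..(1/b), 1/y^4 * Real.exp (-((f y - f (1/b))/ε^2)) := by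
    rw [h1, smul_eq_mul]
    field_simp
  exact hfin.symm

theorem eq1 {b : ℝ} (hb : 0 < b) (f : ℝ → ℝ)
    (hf : ∀ x : ℝ, f x = 1 / (3 * x ^ 3) - b / (2 * x ^ 2)) {ε : ℝ} (hε : 0 < ε) :
    2 / ε ^ 2 *
          ((∫ y in (0 : ℝ)..(1 / b), ∫ w in (1 / b)..(1 / b + ε),
              1 / y ^ 4 * Real.exp ((f w - f y) / ε ^ 2)) +
            (∫ y in (1 / b)..(1 / b + ε), ∫ w in y..(1 / b + ε),
              1 / y ^ 4 * Real.exp ((f w - f y) / ε ^ 2)))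
      = 2 * ((∫ t in (0:ℝ)..1, gg b ε t) * (∫ s in (0:ℝ)..(1/(b*ε)), qq b ε s))
        + 2 * ∫ s in (0:ℝ)..1, rr b ε s * (∫ t in s..1, gg b ε t) := by
  set c := f (1/b)
  have hfact : ∀ y w : ℝ, 1 / y ^ 4 * Real.exp ((f w - f y) / ε ^ 2)
      = (1/y^4 * Real.exp (-((f y - c)/ε^2))) * Real.exp ((f w - c)/ε^2) := by
    intro y w
    rw [mul_assoc, ← Real.exp_add]
    congr 2
    ring
  -- A term
  have hA : (∫ y in (0 : ℝ)..(1 / b), ∫ w in (1 / b)..(1 / b + ε),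
        1 / y ^ 4 * Real.exp ((f w - f y) / ε ^ 2))
      = (ε * ∫ s in (0:ℝ)..(1/(b*ε)), qq b ε s) * (ε * ∫ t in (0:ℝ)..1, gg b ε t) := by
    have hsubG0 : (∫ w in (1/b)..(1/b + ε), Real.exp ((f w - c)/ε^2))
        = ε * ∫ t in (0:ℝ)..1, gg b ε t := by
      have := subG hb f hf hε (le_refl (0:ℝ))
      rwa [show 1/b + ε*0 = 1/b by ring] at this
    have step1 : ∀ y : ℝ, (∫ w in (1 / b)..(1 / b + ε), 1 / y ^ 4 * Real.exp ((f w - f y) / ε ^ 2))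
        = (1/y^4 * Real.exp (-((f y - c)/ε^2))) * (ε * ∫ t in (0:ℝ)..1, gg b ε t) := by
      intro y
      rw [← hsubG0, ← intervalIntegral.integral_const_mul]
      apply integral_congr
      intro w _
      exact hfact y w
    rw [integral_congr (fun y _ => step1 y), intervalIntegral.integral_mul_const, subP hb f hf hε]
  -- B term
  have hB : (∫ y in (1 / b)..(1 / b + ε), ∫ w in y..(1 / b + ε),
        1 / y ^ 4 * Real.exp ((f w - f y) / ε ^ 2))
      = ε * ∫ s in (0:ℝ)..1, rr b ε s * (ε * ∫ t in s..1, gg b ε t) := by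
    have step1 : ∀ y : ℝ, (∫ w in y..(1 / b + ε), 1 / y ^ 4 * Real.exp ((f w - f y) / ε ^ 2))
        = (1/y^4 * Real.exp (-((f y - c)/ε^2))) * ∫ w in y..(1/b + ε), Real.exp ((f w - c)/ε^2) := by
      intro y
      rw [← intervalIntegral.integral_const_mul]
      apply integral_congr
      intro w _
      exact hfact y w
    rw [integral_congr (fun y _ => step1 y)]
    have h1 : (∫ s in (0:ℝ)..1, (fun y => (1/y^4 * Real.exp (-((f y - c)/ε^2))) *
          ∫ w in y..(1/b + ε), Real.exp ((f w - c)/ε^2)) (ε * s + 1/b))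
        = ε⁻¹ • ∫ y in (ε*0 + 1/b)..(ε*1 + 1/b), (1/y^4 * Real.exp (-((f y - c)/ε^2))) *
            ∫ w in y..(1/b + ε), Real.exp ((f w - c)/ε^2) :=
      integral_comp_mul_add (fun y => (1/y^4 * Real.exp (-((f y - c)/ε^2))) *
        ∫ w in y..(1/b + ε), Real.exp ((f w - c)/ε^2)) (ne_of_gt hε) (1/b)
    rw [show ε*0 + 1/b = 1/b by ring, show ε*1 + 1/b = 1/b + ε by ring] at h1
    have h2 : (∫ s in (0:ℝ)..1, (fun y => (1/y^4 * Real.exp (-((f y - c)/ε^2))) *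
          ∫ w in y..(1/b + ε), Real.exp ((f w - c)/ε^2)) (ε * s + 1/b))
        = ∫ s in (0:ℝ)..1, rr b ε s * (ε * ∫ t in s..1, gg b ε t) := by
      apply integral_congr
      intro s hs
      rw [uIcc_of_le zero_le_one] at hs
      simp only
      have hy : 0 < 1/b + ε*s :=
        add_pos_of_pos_of_nonneg (by positivity) (mul_nonneg hε.le hs.1)
      rw [show ε*s + 1/b = 1/b + ε*s by ring, ← subG hb f hf hε hs.1]
      congr 1
      rw [key_id hb f hf hy]
      unfold rr
      congr 2
      field_simp
    rw [h2] at h1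
    rw [h1, smul_eq_mul, ← mul_assoc, mul_inv_cancel₀ (ne_of_gt hε), one_mul]
  rw [hA, hB]
  have hR : (∫ s in (0:ℝ)..1, rr b ε s * (ε * ∫ t in s..1, gg b ε t))
      = ε * ∫ s in (0:ℝ)..1, rr b ε s * (∫ t in s..1, gg b ε t) := by
    rw [← intervalIntegral.integral_const_mul]
    apply integral_congr
    intro s _
    ring
  rw [hR]
  have hε2 : (ε:ℝ)^2 ≠ 0 := by positivity
  field_simp

theorem phi_tendsto {b : ℝ} (hb : 0 < b) (t : ℝ) :
    Tendsto (fun ε : ℝ => phi b (ε * t)) (𝓝 0) (𝓝 (b^5/2)) := by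
  have h0 : (1:ℝ)/b + 0 ≠ 0 := by simp; positivity
  have h1 := (phi_contAt hb h0).tendsto
  rw [phi_zero hb] at h1
  have h2 : Tendsto (fun ε : ℝ => ε * t) (𝓝 0) (𝓝 0) := by
    simpa using (continuous_mul_right t).tendsto 0
  exact h1.comp h2

theorem meas_gg (b ε : ℝ) : Measurable (gg b ε) := by unfold gg phi; fun_prop
theorem meas_qq (b ε : ℝ) : Measurable (qq b ε) := by unfold qq phi; fun_prop
theorem meas_rr (b ε : ℝ) : Measurable (rr b ε) := by unfold rr phi; fun_prop

-- pointwise limits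
theorem gg_tendsto {b : ℝ} (hb : 0 < b) (t : ℝ) :
    Tendsto (fun ε : ℝ => gg b ε t) (𝓝[>] 0) (𝓝 (Real.exp (b^5/2 * t^2))) := by
  unfold gg
  have : Tendsto (fun ε : ℝ => t^2 * phi b (ε*t)) (𝓝 0) (𝓝 (t^2 * (b^5/2))) :=
    (tendsto_const_nhds.mul (phi_tendsto hb t))
  have h2 := (Real.continuous_exp.tendsto _).comp this
  rw [show t^2 * (b^5/2) = b^5/2 * t^2 by ring] at h2
  exact h2.mono_left nhdsWithin_le_nhds

theorem qq_tendsto {b : ℝ} (hb : 0 < b) (s : ℝ) :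
    Tendsto (fun ε : ℝ => qq b ε s) (𝓝[>] 0) (𝓝 (b^4 * Real.exp (-(b^5/2 * s^2)))) := by
  unfold qq
  have hb4 : (1:ℝ)/(1/b - 0*s)^4 = b^4 := by
    rw [zero_mul, sub_zero]; field_simp
  have T1 : Tendsto (fun ε : ℝ => 1/(1/b - ε*s)^4) (𝓝 0) (𝓝 (b^4)) := by
    rw [← hb4]
    apply Tendsto.div tendsto_const_nhds
    · exact ((continuous_const.sub (continuous_id.mul continuous_const)).pow 4).tendsto 0
    · rw [zero_mul, sub_zero]; positivity
  have hphi : Tendsto (fun ε : ℝ => phi b (-(ε*s))) (𝓝 0) (𝓝 (b^5/2)) := by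
    have := phi_tendsto hb (-s)
    apply this.congr
    intro ε; congr 1; ring
  have T2 : Tendsto (fun ε : ℝ => Real.exp (-(s^2 * phi b (-(ε*s))))) (𝓝 0)
      (𝓝 (Real.exp (-(b^5/2 * s^2)))) := by
    have h1 : Tendsto (fun ε : ℝ => -(s^2 * phi b (-(ε*s)))) (𝓝 0) (𝓝 (-(s^2 * (b^5/2)))) :=
      (tendsto_const_nhds.mul hphi).neg
    have h2 := (Real.continuous_exp.tendsto _).comp h1
    rw [show -(s^2 * (b^5/2)) = -(b^5/2 * s^2) by ring] at h2
    exact h2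
  exact ((T1.mul T2)).mono_left nhdsWithin_le_nhds

theorem rr_tendsto {b : ℝ} (hb : 0 < b) (s : ℝ) :
    Tendsto (fun ε : ℝ => rr b ε s) (𝓝[>] 0) (𝓝 (b^4 * Real.exp (-(b^5/2 * s^2)))) := by
  unfold rr
  have hb4 : (1:ℝ)/(1/b + 0*s)^4 = b^4 := by
    rw [zero_mul, add_zero]; field_simp
  have T1 : Tendsto (fun ε : ℝ => 1/(1/b + ε*s)^4) (𝓝 0) (𝓝 (b^4)) := by
    rw [← hb4]
    apply Tendsto.div tendsto_const_nhds
    · exact ((continuous_const.add (continuous_id.mul continuous_const)).pow 4).tendsto 0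
    · rw [zero_mul, add_zero]; positivity
  have hphi : Tendsto (fun ε : ℝ => phi b (ε*s)) (𝓝 0) (𝓝 (b^5/2)) := phi_tendsto hb s
  have T2 : Tendsto (fun ε : ℝ => Real.exp (-(s^2 * phi b (ε*s)))) (𝓝 0)
      (𝓝 (Real.exp (-(b^5/2 * s^2)))) := by
    have h1 : Tendsto (fun ε : ℝ => -(s^2 * phi b (ε*s))) (𝓝 0) (𝓝 (-(s^2 * (b^5/2)))) :=
      (tendsto_const_nhds.mul hphi).neg
    have h2 := (Real.continuous_exp.tendsto _).comp h1
    rw [show -(s^2 * (b^5/2)) = -(b^5/2 * s^2) by ring] at h2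
    exact h2
  exact ((T1.mul T2)).mono_left nhdsWithin_le_nhds

theorem exp_neg_le_four_div_sq {x : ℝ} (hx : 0 < x) : Real.exp (-x) ≤ 4/x^2 := by
  have hsq : Real.exp x = Real.exp (x/2) * Real.exp (x/2) := by
    rw [← Real.exp_add]; ring_nf
  have h1 : x/2 + 1 ≤ Real.exp (x/2) := Real.add_one_le_exp (x/2)
  have h2 : x^2/4 ≤ Real.exp x := by nlinarith [Real.exp_pos (x/2)]
  rw [Real.exp_neg, inv_le_iff_one_le_mul₀ (Real.exp_pos x)]
  calc (1:ℝ) = (x^2/4) * (4/x^2) := by field_simp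
  _ ≤ Real.exp x * (4/x^2) := mul_le_mul_of_nonneg_right h2 (by positivity)
  _ = 4/x^2 * Real.exp x := by ring

set_option maxHeartbeats 1000000 in
theorem qq_bound {b : ℝ} (hb : 0 < b) {ε s : ℝ} (hε : 0 < ε) (hε1 : ε ≤ 1)
    (hs : 0 < s) (hsM : s ≤ 1/(b*ε)) :
    qq b ε s ≤ (81*b^4 + 81/b^2) * Real.exp (-(b^5/2 * s^2)) := by
  set y := 1/b - ε*s with hy
  have hbε : 0 < b*ε := by positivity
  have hεsb : ε*s ≤ 1/b := by
    have h := (le_div_iff₀ hbε).1 hsM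
    rw [le_div_iff₀ hb]
    nlinarith
  have hy0 : 0 ≤ y := by rw [hy]; linarith
  clear_value y
  have hqq : qq b ε s = 1/y^4 * Real.exp (-(s^2 * phi b (-(ε*s)))) := by
    unfold qq; rw [← hy]
  have hexp_pos : (0:ℝ) < Real.exp (-(b^5/2 * s^2)) := Real.exp_pos _
  rcases le_or_gt (1/(3*b)) y with hcase | hcase
  · -- y not too small
    have hy0' : 0 < y := lt_of_lt_of_le (by positivity) hcase
    have h3by : 1 ≤ 3*b*y := by
      rw [div_le_iff₀ (by positivity : (0:ℝ) < 3*b)] at hcase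
      linarith [hcase]
    have h1 : 1/y^4 ≤ 81*b^4 := by
      rw [div_le_iff₀ (by positivity : (0:ℝ) < y^4)]
      have : (1:ℝ) = 1^4 := by norm_num
      calc (1:ℝ) = 1^4 := by norm_num
      _ ≤ (3*b*y)^4 := by apply pow_le_pow_left₀ (by norm_num) h3by
      _ = 81*b^4*y^4 := by ring
    have hphi : b^5/2 ≤ phi b (-(ε*s)) := by
      apply phi_ge hb
      · have : ε*s < 1/b := by
          by_contra hcon
          push_neg at hcon
          have : y ≤ 0 := by rw [hy]; linarith
          linarith [lt_of_lt_of_le hy0' (le_refl y)]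
        linarith
      · have : 0 ≤ ε*s := by positivity
        linarith
    have hexp : Real.exp (-(s^2 * phi b (-(ε*s)))) ≤ Real.exp (-(b^5/2 * s^2)) := by
      apply Real.exp_le_exp.2
      have := mul_le_mul_of_nonneg_left hphi (sq_nonneg s)
      nlinarith
    rw [hqq]
    calc 1/y^4 * Real.exp (-(s^2 * phi b (-(ε*s)))) ≤ 81*b^4 * Real.exp (-(b^5/2 * s^2)) := by
          apply mul_le_mul h1 hexp (Real.exp_pos _).le (by positivity)
    _ ≤ (81*b^4 + 81/b^2) * Real.exp (-(b^5/2 * s^2)) := by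
          apply mul_le_mul_of_nonneg_right _ hexp_pos.le
          have : (0:ℝ) < 81/b^2 := by positivity
          linarith
  · -- y small
    rcases eq_or_lt_of_le hy0 with heq | hy0'
    · rw [hqq, ← heq]
      norm_num
      positivity
    have h3by : 3*b*y < 1 := by
      rw [lt_div_iff₀ (by positivity : (0:ℝ) < 3*b)] at hcase
      nlinarith
    -- algebraic form of phi
    have hu : ε*s = 1/b - y := by rw [hy]; ring
    have e1 : 3 + b*(-(ε*s)) = 2 + b*y := by rw [hu]; field_simp; ring
    have e2 : 1/b + (-(ε*s)) = y := by rw [hu]; ring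
    have hphi_val : phi b (-(ε*s)) = b^2*(2 + b*y)/(6*y^3) := by
      unfold phi; rw [e1, e2]
    -- lower bound for b*s
    have hbs : 2/3 ≤ b*s := by
      have h1 : b*(ε*s) = 1 - b*y := by rw [hu]; field_simp
      have h2 : ε*s ≤ s := mul_le_of_le_one_left hs.le hε1
      nlinarith
    -- key exponent inequality
    have hbs2 : 4/9 ≤ (b*s)^2 := by nlinarith
    have hv3 : 27*(b*y)^3 ≤ 1 := by nlinarith [sq_nonneg (b*y), mul_pos hb hy0']
    have key : 27*b^5*s^2*y^3 + 4 ≤ 9*s^2*(b^2*(2+b*y)) := by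
      have hP : 27*b^5*s^2*y^3 = (b*s)^2*(27*(b*y)^3) := by ring
      have h1 : (b*s)^2*(27*(b*y)^3) ≤ (b*s)^2*1 :=
        mul_le_mul_of_nonneg_left hv3 (sq_nonneg (b*s))
      have h2 : 0 ≤ (b*s)^2*(b*y) := by positivity
      nlinarith
    have gl : b^5/2 * s^2 + 2/(27*y^3) ≤ s^2 * (b^2*(2+b*y)/(6*y^3)) := by
      rw [← sub_nonneg]
      have expand : s^2 * (b^2*(2+b*y)/(6*y^3)) - (b^5/2*s^2 + 2/(27*y^3))
          = (9*s^2*(b^2*(2+b*y)) - (27*b^5*s^2*y^3 + 4))/(54*y^3) := by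
        field_simp
        ring
      rw [expand]
      apply div_nonneg (by linarith) (by positivity)
    -- assemble
    have hexp : Real.exp (-(s^2 * phi b (-(ε*s))))
        ≤ Real.exp (-(b^5/2 * s^2)) * Real.exp (-(2/(27*y^3))) := by
      rw [← Real.exp_add]
      apply Real.exp_le_exp.2
      rw [hphi_val]
      linarith
    have hE : Real.exp (-(2/(27*y^3))) ≤ 729*y^6 := by
      have h1 := exp_neg_le_four_div_sq (x := 2/(27*y^3)) (by positivity)
      have h2 : 4/(2/(27*y^3))^2 = 729*y^6 := by field_simp; ring
      linarith [h1, h2.le, h2.ge]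
    have hyb2 : 729*y^2 ≤ 81/b^2 := by
      rw [le_div_iff₀ (by positivity : (0:ℝ) < b^2)]
      have hpos : 0 < 3*b*y := by nlinarith
      nlinarith [mul_pos (sub_pos.2 h3by) (by linarith : (0:ℝ) < 1 + 3*b*y)]
    rw [hqq]
    calc 1/y^4 * Real.exp (-(s^2 * phi b (-(ε*s))))
        ≤ 1/y^4 * (Real.exp (-(b^5/2 * s^2)) * Real.exp (-(2/(27*y^3)))) :=
          mul_le_mul_of_nonneg_left hexp (by positivity)
    _ = (1/y^4 * Real.exp (-(2/(27*y^3)))) * Real.exp (-(b^5/2 * s^2)) := by ring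
    _ ≤ (1/y^4 * (729*y^6)) * Real.exp (-(b^5/2 * s^2)) := by
          apply mul_le_mul_of_nonneg_right _ hexp_pos.le
          exact mul_le_mul_of_nonneg_left hE (by positivity)
    _ = 729*y^2 * Real.exp (-(b^5/2 * s^2)) := by
          congr 1
          field_simp
    _ ≤ (81/b^2) * Real.exp (-(b^5/2 * s^2)) := mul_le_mul_of_nonneg_right hyb2 hexp_pos.le
    _ ≤ (81*b^4 + 81/b^2) * Real.exp (-(b^5/2 * s^2)) := by
          apply mul_le_mul_of_nonneg_right _ hexp_pos.le
          nlinarith [pow_pos hb 4]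

theorem K_tendsto {b : ℝ} (hb : 0 < b) {s : ℝ} (hs0 : 0 ≤ s) (hs1 : s ≤ 1) :
    Tendsto (fun ε : ℝ => ∫ t in s..1, gg b ε t) (𝓝[>] 0)
      (𝓝 (∫ t in s..1, Real.exp (b^5/2 * t^2))) := by
  apply intervalIntegral.tendsto_integral_filter_of_dominated_convergence
    (bound := fun _ => Real.exp (b^5/2))
  · exact Eventually.of_forall fun ε => (meas_gg b ε).aestronglyMeasurable.restrict
  · filter_upwards [self_mem_nhdsWithin] with ε (hε : ε ∈ Ioi (0:ℝ))
    rw [Set.mem_Ioi] at hε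
    refine Eventually.of_forall fun t ht => ?_
    rw [Set.uIoc_of_le hs1] at ht
    have ht0 : 0 < t := lt_of_le_of_lt hs0 ht.1
    have ht1 : t ≤ 1 := ht.2
    unfold gg
    rw [Real.norm_eq_abs, Real.abs_exp]
    apply Real.exp_le_exp.2
    have h1 := phi_le hb (by positivity : (0:ℝ) ≤ ε*t)
    have h2 := phi_nonneg hb (by positivity : (0:ℝ) ≤ ε*t)
    have ht2 : t^2 ≤ 1 := by nlinarith
    have := mul_le_of_le_one_left h2 ht2
    linarith
  · exact intervalIntegrable_const
  · exact Eventually.of_forall fun t _ => gg_tendsto hb t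

theorem Q_tendsto {b : ℝ} (hb : 0 < b) :
    Tendsto (fun ε : ℝ => ∫ s in (0:ℝ)..(1/(b*ε)), qq b ε s) (𝓝[>] 0)
      (𝓝 (∫ s in Ioi (0:ℝ), b^4 * Real.exp (-(b^5/2 * s^2)))) := by
  have heq : ∀ᶠ ε in 𝓝[>] (0:ℝ), (∫ s in Ioi (0:ℝ), (Ioc (0:ℝ) (1/(b*ε))).indicator (qq b ε) s)
      = ∫ s in (0:ℝ)..(1/(b*ε)), qq b ε s := by
    filter_upwards [self_mem_nhdsWithin] with ε (hε : ε ∈ Ioi (0:ℝ))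
    rw [Set.mem_Ioi] at hε
    rw [setIntegral_indicator measurableSet_Ioc,
      Set.inter_eq_self_of_subset_right Ioc_subset_Ioi_self,
      intervalIntegral.integral_of_le (by positivity : (0:ℝ) ≤ 1/(b*ε))]
  apply Tendsto.congr' heq
  apply MeasureTheory.tendsto_integral_filter_of_dominated_convergence
    (bound := fun s => (81*b^4 + 81/b^2) * Real.exp (-(b^5/2 * s^2)))
  · exact Eventually.of_forall fun ε =>
      ((meas_qq b ε).indicator measurableSet_Ioc).aestronglyMeasurable
  · filter_upwards [Ioo_mem_nhdsGT_of_mem ⟨le_refl (0:ℝ), zero_lt_one⟩] with ε hε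
    refine (ae_restrict_iff' measurableSet_Ioi).2 (Eventually.of_forall fun s hs => ?_)
    rw [Set.mem_Ioi] at hs
    by_cases hmem : s ∈ Ioc (0:ℝ) (1/(b*ε))
    · rw [indicator_of_mem hmem, Real.norm_eq_abs, abs_of_nonneg (by unfold qq; positivity)]
      exact qq_bound hb hε.1 hε.2.le hs hmem.2
    · rw [indicator_of_notMem hmem, norm_zero]
      positivity
  · apply Integrable.const_mul
    have h := integrable_exp_neg_mul_sq (by positivity : (0:ℝ) < b^5/2)
    simp only [neg_mul] at h
    exact h.restrict
  · refine (ae_restrict_iff' measurableSet_Ioi).2 (Eventually.of_forall fun s hs => ?_)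
    rw [Set.mem_Ioi] at hs
    have hev : ∀ᶠ ε in 𝓝[>] (0:ℝ), qq b ε s = (Ioc (0:ℝ) (1/(b*ε))).indicator (qq b ε) s := by
      filter_upwards [Ioo_mem_nhdsGT_of_mem ⟨le_refl (0:ℝ),
        one_div_pos.2 (mul_pos hb hs)⟩] with ε hε
      have hεM : s ≤ 1/(b*ε) := by
        rw [le_div_iff₀ (mul_pos hb hε.1)]
        have := (lt_div_iff₀ (mul_pos hb hs)).1 hε.2
        nlinarith
      rw [Set.indicator_of_mem (show s ∈ Ioc (0:ℝ) (1/(b*ε)) from ⟨hs, hεM⟩) (qq b ε)]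
    exact Tendsto.congr' hev (qq_tendsto hb s)

theorem R_tendsto {b : ℝ} (hb : 0 < b) :
    Tendsto (fun ε : ℝ => ∫ s in (0:ℝ)..1, rr b ε s * ∫ t in s..1, gg b ε t) (𝓝[>] 0)
      (𝓝 (∫ s in (0:ℝ)..1, (b^4 * Real.exp (-(b^5/2 * s^2))) *
            ∫ t in s..1, Real.exp (b^5/2 * t^2))) := by
  apply intervalIntegral.tendsto_integral_filter_of_dominated_convergence
    (bound := fun _ => b^4 * (Real.exp (b^5/2) * 1))
  · -- measurability via ContinuousOn on Icc 0 1
    filter_upwards [self_mem_nhdsWithin] with ε (hε : ε ∈ Ioi (0:ℝ))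
    rw [Set.mem_Ioi] at hε
    have hpos : ∀ x : ℝ, x ∈ Icc (0:ℝ) 1 → 0 < 1/b + ε*x := by
      intro x hx
      have := mul_nonneg hε.le hx.1
      have := one_div_pos.2 hb
      linarith
    have hcont_phi : ContinuousOn (fun x : ℝ => phi b (ε*x)) (Icc 0 1) := by
      unfold phi
      apply ContinuousOn.div (by fun_prop) (by fun_prop)
      intro x hx
      have := hpos x hx
      have h3 : 0 < (1/b + ε*x)^3 := by positivity
      exact ne_of_gt (by linarith [mul_pos (by norm_num : (0:ℝ) < 6) h3])
    have hcont_gg : ContinuousOn (gg b ε) (Icc 0 1) := by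
      unfold gg
      exact (Real.continuous_exp.comp_continuousOn ((continuousOn_pow 2).mul hcont_phi))
    have hcont_rr : ContinuousOn (rr b ε) (Icc 0 1) := by
      unfold rr
      apply ContinuousOn.mul
      · apply ContinuousOn.div continuousOn_const (by fun_prop)
        intro x hx
        have := hpos x hx
        exact ne_of_gt (by positivity)
      · exact Real.continuous_exp.comp_continuousOn (((continuousOn_pow 2).mul hcont_phi).neg)
    have hcont_K : ContinuousOn (fun x : ℝ => ∫ t in x..1, gg b ε t) (Icc 0 1) := by
      have h_int : IntegrableOn (gg b ε) (uIcc 0 1) volume := by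
        rw [uIcc_of_le zero_le_one]
        exact hcont_gg.integrableOn_Icc
      have := intervalIntegral.continuousOn_primitive_interval_left h_int
      rwa [uIcc_of_le zero_le_one] at this
    have : ContinuousOn (fun x : ℝ => rr b ε x * ∫ t in x..1, gg b ε t) (Icc 0 1) :=
      hcont_rr.mul hcont_K
    exact (this.aestronglyMeasurable measurableSet_Icc).mono_measure
      (Measure.restrict_mono (by rw [Set.uIoc_of_le zero_le_one]; exact Ioc_subset_Icc_self) le_rfl)
  · filter_upwards [self_mem_nhdsWithin] with ε (hε : ε ∈ Ioi (0:ℝ))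
    rw [Set.mem_Ioi] at hε
    refine Eventually.of_forall fun x hx => ?_
    rw [Set.uIoc_of_le zero_le_one] at hx
    have hx0 : 0 < x := hx.1
    have hx1 : x ≤ 1 := hx.2
    rw [norm_mul]
    apply mul_le_mul
    · -- ‖rr‖ ≤ b^4
      rw [Real.norm_eq_abs, abs_of_nonneg (by unfold rr; positivity)]
      unfold rr
      have h1 : 1/(1/b + ε*x)^4 ≤ b^4 := by
        have hgt : 1/b ≤ 1/b + ε*x := by nlinarith
        have h2 : (1/b)^4 ≤ (1/b + ε*x)^4 :=
          pow_le_pow_left₀ (by positivity) hgt 4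
        calc 1/(1/b + ε*x)^4 ≤ 1/(1/b)^4 := by
              apply one_div_le_one_div_of_le (by positivity) h2
        _ = b^4 := by field_simp
      have h2 : Real.exp (-(x^2 * phi b (ε*x))) ≤ 1 := by
        apply Real.exp_le_one_iff.2
        have := phi_nonneg hb (by positivity : (0:ℝ) ≤ ε*x)
        nlinarith [sq_nonneg x]
      calc 1/(1/b + ε*x)^4 * Real.exp (-(x^2 * phi b (ε*x))) ≤ b^4 * 1 := by
            apply mul_le_mul h1 h2 (Real.exp_pos _).le (by positivity)
      _ = b^4 := by ring
    · -- ‖K‖ ≤ exp(b^5/2) * 1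
      have h := intervalIntegral.norm_integral_le_of_norm_le_const
        (C := Real.exp (b^5/2)) (f := gg b ε) (a := x) (b := 1) ?_
      · calc ‖∫ t in x..1, gg b ε t‖ ≤ Real.exp (b^5/2) * |1 - x| := h
        _ ≤ Real.exp (b^5/2) * 1 := by
            apply mul_le_mul_of_nonneg_left _ (Real.exp_pos _).le
            rw [abs_of_nonneg (by linarith)]
            linarith
      · intro t ht
        rw [Set.uIoc_of_le hx1] at ht
        have ht0 : 0 < t := lt_trans hx0 ht.1
        have ht1 : t ≤ 1 := ht.2
        unfold gg
        rw [Real.norm_eq_abs, Real.abs_exp]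
        apply Real.exp_le_exp.2
        have h1 := phi_le hb (by positivity : (0:ℝ) ≤ ε*t)
        have h2 := phi_nonneg hb (by positivity : (0:ℝ) ≤ ε*t)
        have ht2 : t^2 ≤ 1 := by nlinarith
        have := mul_le_of_le_one_left h2 ht2
        linarith
    · positivity
    · positivity
  · exact intervalIntegrable_const
  · refine Eventually.of_forall fun x hx => ?_
    rw [Set.uIoc_of_le zero_le_one] at hx
    exact (rr_tendsto hb x).mul (K_tendsto hb hx.1.le hx.2)

/-- (Analytic core of Proposition 4.12: limit of the expected upcrossing time in the Rabi model,
equation (4.19).) For every `b > 0`, with `f(x) := 1/(3x³) − b/(2x²)`: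
`lim_{ε→0⁺} (2/ε²)·[∫_0^{1/b} ∫_{1/b}^{1/b+ε} y⁻⁴·e^{(f(w)−f(y))/ε²} dw dy
  + ∫_{1/b}^{1/b+ε} ∫_y^{1/b+ε} y⁻⁴·e^{(f(w)−f(y))/ε²} dw dy]
 = 2b⁴·∫_0^∞ ∫_0^1 e^{(b⁵/2)(w²−y²)} dw dy + 2b⁴·∫_0^1 ∫_y^1 e^{(b⁵/2)(w²−y²)} dw dy`,
and this limit is finite. -/
theorem statement15 (b : ℝ) (hb : 0 < b)
    (f : ℝ → ℝ) (hf : ∀ x : ℝ, f x = 1 / (3 * x ^ 3) - b / (2 * x ^ 2)) :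
    Tendsto
      (fun ε : ℝ =>
        2 / ε ^ 2 *
          ((∫ y in (0 : ℝ)..(1 / b), ∫ w in (1 / b)..(1 / b + ε),
              1 / y ^ 4 * Real.exp ((f w - f y) / ε ^ 2)) +
            (∫ y in (1 / b)..(1 / b + ε), ∫ w in y..(1 / b + ε),
              1 / y ^ 4 * Real.exp ((f w - f y) / ε ^ 2))))
      (𝓝[>] (0 : ℝ))
      (𝓝 (2 * b ^ 4 *
            (∫ y in Ioi (0 : ℝ), ∫ w in (0 : ℝ)..1, Real.exp (b ^ 5 / 2 * (w ^ 2 - y ^ 2))) +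
          2 * b ^ 4 *
            ∫ y in (0 : ℝ)..1, ∫ w in y..1, Real.exp (b ^ 5 / 2 * (w ^ 2 - y ^ 2)))) ∧
    IntegrableOn
      (fun y : ℝ => ∫ w in (0 : ℝ)..1, Real.exp (b ^ 5 / 2 * (w ^ 2 - y ^ 2)))
      (Ioi 0) volume := by
  have hsplit : ∀ w y : ℝ, Real.exp (b^5/2*(w^2 - y^2))
      = Real.exp (b^5/2*w^2) * Real.exp (-(b^5/2*y^2)) := by
    intro w y; rw [← Real.exp_add]; ring_nf
  have h1 : ∀ y : ℝ, (∫ w in (0:ℝ)..1, Real.exp (b^5/2*(w^2 - y^2)))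
      = (∫ w in (0:ℝ)..1, Real.exp (b^5/2*w^2)) * Real.exp (-(b^5/2*y^2)) := by
    intro y
    rw [← intervalIntegral.integral_mul_const]
    exact intervalIntegral.integral_congr fun w _ => hsplit w y
  constructor
  · -- the limit
    have hL := (((K_tendsto hb le_rfl zero_le_one).mul (Q_tendsto hb)).const_mul 2).add
      ((R_tendsto hb).const_mul 2)
    have heq : ∀ᶠ ε in 𝓝[>] (0:ℝ),
        (2 * ((∫ t in (0:ℝ)..1, gg b ε t) * (∫ s in (0:ℝ)..(1/(b*ε)), qq b ε s))
          + 2 * ∫ s in (0:ℝ)..1, rr b ε s * (∫ t in s..1, gg b ε t))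
        = 2 / ε ^ 2 *
          ((∫ y in (0 : ℝ)..(1 / b), ∫ w in (1 / b)..(1 / b + ε),
              1 / y ^ 4 * Real.exp ((f w - f y) / ε ^ 2)) +
            (∫ y in (1 / b)..(1 / b + ε), ∫ w in y..(1 / b + ε),
              1 / y ^ 4 * Real.exp ((f w - f y) / ε ^ 2))) := by
      filter_upwards [self_mem_nhdsWithin] with ε (hε : ε ∈ Ioi (0:ℝ))
      rw [Set.mem_Ioi] at hε
      exact (eq1 hb f hf hε).symm
    have hT := hL.congr' heq
    have hval : (2 * b ^ 4 *
            (∫ y in Ioi (0 : ℝ), ∫ w in (0 : ℝ)..1, Real.exp (b ^ 5 / 2 * (w ^ 2 - y ^ 2))) +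
          2 * b ^ 4 *
            ∫ y in (0 : ℝ)..1, ∫ w in y..1, Real.exp (b ^ 5 / 2 * (w ^ 2 - y ^ 2)))
        = 2 * ((∫ t in (0:ℝ)..1, Real.exp (b^5/2 * t^2)) *
              (∫ s in Ioi (0:ℝ), b^4 * Real.exp (-(b^5/2 * s^2))))
          + 2 * ∫ s in (0:ℝ)..1, (b^4 * Real.exp (-(b^5/2 * s^2))) *
              ∫ t in s..1, Real.exp (b^5/2 * t^2) := by
      have h2 : (∫ y in Ioi (0:ℝ), ∫ w in (0:ℝ)..1, Real.exp (b^5/2*(w^2-y^2)))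
          = (∫ w in (0:ℝ)..1, Real.exp (b^5/2*w^2))
            * ∫ y in Ioi (0:ℝ), Real.exp (-(b^5/2*y^2)) := by
        simp only [h1]
        exact MeasureTheory.integral_const_mul _ _
      have h3 : (∫ s in Ioi (0:ℝ), b^4 * Real.exp (-(b^5/2*s^2)))
          = b^4 * ∫ y in Ioi (0:ℝ), Real.exp (-(b^5/2*y^2)) := MeasureTheory.integral_const_mul _ _
      have h4 : ∀ y : ℝ, (∫ w in y..1, Real.exp (b^5/2*(w^2 - y^2)))
          = (∫ w in y..1, Real.exp (b^5/2*w^2)) * Real.exp (-(b^5/2*y^2)) := by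
        intro y
        rw [← intervalIntegral.integral_mul_const]
        exact intervalIntegral.integral_congr fun w _ => hsplit w y
      have h5 : (∫ y in (0:ℝ)..1, ∫ w in y..1, Real.exp (b^5/2*(w^2-y^2)))
          = ∫ y in (0:ℝ)..1, (Real.exp (-(b^5/2*y^2)) * ∫ w in y..1, Real.exp (b^5/2*w^2)) :=
        intervalIntegral.integral_congr fun y _ => by rw [h4 y]; ring
      have h6 : (∫ s in (0:ℝ)..1, (b^4 * Real.exp (-(b^5/2 * s^2))) *
              ∫ t in s..1, Real.exp (b^5/2 * t^2))
          = b^4 * ∫ s in (0:ℝ)..1, (Real.exp (-(b^5/2*s^2)) * ∫ t in s..1, Real.exp (b^5/2*t^2)) := by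
        rw [← intervalIntegral.integral_const_mul]
        exact intervalIntegral.integral_congr fun s _ => by ring
      rw [h2, h3, h5, h6]
      ring
    rw [hval]
    exact hT
  · -- integrability
    have heqf : (fun y : ℝ => ∫ w in (0:ℝ)..1, Real.exp (b^5/2*(w^2-y^2)))
        = fun y : ℝ => (∫ w in (0:ℝ)..1, Real.exp (b^5/2*w^2)) * Real.exp (-(b^5/2*y^2)) :=
      funext h1
    rw [heqf]
    have h := integrable_exp_neg_mul_sq (by positivity : (0:ℝ) < b^5/2)
    simp only [neg_mul] at h
    exact (h.const_mul _).integrableOn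
end

section
/- (Uniform bound (4.26) for the second moment of the downcrossing time.) For every b > 0, with f(x) := 1/(3x³) − b/(2x²), one has limsup_{ε→0⁺} (1/ε³)·∫_{1/b}^∞ ∫_{1/b}^{y} ∫_{1/b}^{ỹ} (y·ỹ)^{−4}·exp( (1/ε²)·( −b³/6 − f(y) + f(w̃) − f(ỹ) ) ) dw̃ dỹ dy < ∞. -/
open MeasureTheory Real Set Filter
open scoped Topology Interval

/-!
Write `s = 1 - 1/(b y)`. Then `f y + b³/6 - (b³/6) s² = (b y - 1)² / (3 y³) ≥ 0`, and `f` is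
increasing on `[1/b, ∞)`, so the integrand is at most `b⁴ y⁻⁴ exp(-(b³/6) s² / ε²)`. Bounding the
two inner integrals by length times supremum leaves
`b⁴ y⁻⁴ (y - 1/b)² exp(-(b³/6) s²/ε²) = b⁵ s'(y) s² exp(-(b³/6) s²/ε²)`, so the substitution
`y ↦ s`, which maps `(1/b, ∞)` onto `(0, 1)`, bounds the whole integral by `b⁵` times the Gaussian
second moment `∫₀^∞ s² exp(-(b³/6) s²/ε²) ds`, and that moment scales exactly like `ε³`.
-/

noncomputable def rabiPotential (b x : ℝ) : ℝ := 1 / (3 * x ^ 3) - b / (2 * x ^ 2)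

lemma rabiPotential_add_sub_eq {b y : ℝ} (hb : b ≠ 0) (hy : y ≠ 0) :
    rabiPotential b y + b ^ 3 / 6 - b ^ 3 / 6 * (1 - 1 / (b * y)) ^ 2
      = (b * y - 1) ^ 2 / (3 * y ^ 3) := by
  unfold rabiPotential
  field_simp
  ring

lemma sq_one_sub_inv_le_rabiPotential_add {b y : ℝ} (hb : b ≠ 0) (hy : 0 < y) :
    b ^ 3 / 6 * (1 - 1 / (b * y)) ^ 2 ≤ rabiPotential b y + b ^ 3 / 6 := by
  have := rabiPotential_add_sub_eq hb hy.ne'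
  have : 0 ≤ (b * y - 1) ^ 2 / (3 * y ^ 3) := by positivity
  linarith

lemma monotoneOn_rabiPotential {b : ℝ} (hb : 0 < b) :
    MonotoneOn (rabiPotential b) (Ici (1 / b)) := by
  intro s hs t ht hst
  have hs0 : 0 < s := lt_of_lt_of_le (by positivity) hs
  have ht0 : 0 < t := hs0.trans_le hst
  have hbs : 1 ≤ b * s := by rwa [mem_Ici, div_le_iff₀ hb, mul_comm] at hs
  have hbt : 1 ≤ b * t := by rwa [mem_Ici, div_le_iff₀ hb, mul_comm] at ht
  have hdiff : rabiPotential b t - rabiPotential b s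
      = (t - s) * (3 * b * s * t * (s + t) - 2 * (s ^ 2 + s * t + t ^ 2))
        / (6 * s ^ 3 * t ^ 3) := by
    unfold rabiPotential
    field_simp
    ring
  rw [← sub_nonneg, hdiff]
  apply div_nonneg _ (by positivity)
  apply mul_nonneg (by linarith)
  nlinarith [sq_nonneg (s - t), mul_nonneg (sub_nonneg.2 hbt) (sq_nonneg s),
    mul_nonneg (sub_nonneg.2 hbs) (sq_nonneg t)]

lemma norm_iterated_intervalIntegral_le {E : Type*} [NormedAddCommGroup E] [NormedSpace ℝ E]
    {a y C : ℝ} (g : ℝ → ℝ → E) (hay : a ≤ y) (hC : 0 ≤ C)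
    (h : ∀ t ∈ Ioc a y, ∀ s ∈ Ioc a t, ‖g t s‖ ≤ C) :
    ‖∫ t in a..y, ∫ s in a..t, g t s‖ ≤ C * (y - a) ^ 2 := by
  have inner : ∀ t ∈ Ι a y, ‖∫ s in a..t, g t s‖ ≤ C * (y - a) := by
    intro t ht
    rw [uIoc_of_le hay] at ht
    calc ‖∫ s in a..t, g t s‖ ≤ C * |t - a| :=
          intervalIntegral.norm_integral_le_of_norm_le_const fun s hs =>
            h t ht s (by rwa [uIoc_of_le ht.1.le] at hs)
      _ ≤ C * (y - a) := by
          rw [abs_of_pos (sub_pos.2 ht.1)]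
          gcongr
          exact ht.2
  calc ‖∫ t in a..y, ∫ s in a..t, g t s‖ ≤ C * (y - a) * |y - a| :=
        intervalIntegral.norm_integral_le_of_norm_le_const inner
    _ = C * (y - a) ^ 2 := by rw [abs_of_nonneg (sub_nonneg.2 hay)]; ring

lemma image_one_sub_inv_mul_Ioi {b : ℝ} (hb : 0 < b) :
    (fun y => 1 - 1 / (b * y)) '' Ioi (1 / b) = Ioo 0 1 := by
  ext s
  constructor
  · rintro ⟨y, hy, rfl⟩
    have hby : 1 < b * y := by rwa [mem_Ioi, div_lt_iff₀ hb, mul_comm] at hy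
    have : 0 < 1 / (b * y) := by positivity
    have : 1 / (b * y) < 1 := by rw [div_lt_one (by linarith)]; exact hby
    constructor <;> linarith
  · rintro ⟨hs0, hs1⟩
    refine ⟨1 / (b * (1 - s)), ?_, ?_⟩
    · rw [mem_Ioi]
      have : 1 - s < 1 := by linarith
      have : 0 < 1 - s := by linarith
      rw [div_lt_div_iff₀ hb (by positivity)]
      nlinarith
    · have : 1 - s ≠ 0 := by linarith
      field_simp
      ring

lemma hasDerivAt_one_sub_inv_mul {b y : ℝ} (hb : b ≠ 0) (hy : y ≠ 0) :
    HasDerivAt (fun y => 1 - 1 / (b * y)) (1 / (b * y ^ 2)) y := by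
  have h : HasDerivAt (fun y => b * y) b y := by simpa using (hasDerivAt_id y).const_mul b
  have h' : HasDerivAt (fun y => 1 - (b * y)⁻¹) (-(-b / (b * y) ^ 2)) y :=
    (h.inv (mul_ne_zero hb hy)).const_sub 1
  convert h' using 1
  · simp only [one_div]
  · field_simp

lemma injective_one_sub_inv_mul {b : ℝ} (hb : b ≠ 0) :
    Function.Injective (fun y : ℝ => 1 - 1 / (b * y)) := by
  intro x y hxy
  simpa only [sub_right_inj, one_div, inv_inj, mul_right_inj' hb] using hxy

lemma integrableOn_comp_one_sub_inv_mul_iff {b : ℝ} (hb : 0 < b) (g : ℝ → ℝ) :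
    IntegrableOn (fun y => 1 / (b * y ^ 2) * g (1 - 1 / (b * y))) (Ioi (1 / b))
      ↔ IntegrableOn g (Ioo 0 1) := by
  have hsub : Ioi (1 / b) ⊆ Ioi 0 := Ioi_subset_Ioi (by positivity)
  rw [← image_one_sub_inv_mul_Ioi hb, integrableOn_image_iff_integrableOn_abs_deriv_smul
    measurableSet_Ioi (fun y hy => (hasDerivAt_one_sub_inv_mul hb.ne'
      (hsub hy).ne').hasDerivWithinAt) (injective_one_sub_inv_mul hb.ne').injOn]
  refine integrableOn_congr_fun (fun y hy => ?_) measurableSet_Ioi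
  have : 0 < y := hsub hy
  rw [smul_eq_mul, abs_of_pos (by positivity)]

lemma integral_comp_one_sub_inv_mul {b : ℝ} (hb : 0 < b) (g : ℝ → ℝ) :
    ∫ y in Ioi (1 / b), 1 / (b * y ^ 2) * g (1 - 1 / (b * y)) = ∫ s in Ioo 0 1, g s := by
  have hsub : Ioi (1 / b) ⊆ Ioi 0 := Ioi_subset_Ioi (by positivity)
  rw [← image_one_sub_inv_mul_Ioi hb, integral_image_eq_integral_abs_deriv_smul
    measurableSet_Ioi (fun y hy => (hasDerivAt_one_sub_inv_mul hb.ne'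
      (hsub hy).ne').hasDerivWithinAt) (injective_one_sub_inv_mul hb.ne').injOn]
  refine setIntegral_congr_fun measurableSet_Ioi (fun y hy => ?_)
  have : 0 < y := hsub hy
  rw [smul_eq_mul, abs_of_pos (by positivity)]

lemma setIntegral_comp_one_sub_inv_mul_le {b : ℝ} (hb : 0 < b) {g : ℝ → ℝ}
    (hg : IntegrableOn g (Ioi 0)) (hg0 : ∀ s ∈ Ioi 0, 0 ≤ g s) :
    ∫ y in Ioi (1 / b), 1 / (b * y ^ 2) * g (1 - 1 / (b * y)) ≤ ∫ s in Ioi 0, g s := by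
  rw [integral_comp_one_sub_inv_mul hb]
  exact setIntegral_mono_set hg (ae_restrict_of_forall_mem measurableSet_Ioi hg0)
    Ioo_subset_Ioi_self.eventuallyLE

lemma integrableOn_sq_mul_exp_neg_mul_sq {β : ℝ} (hβ : 0 < β) :
    IntegrableOn (fun s : ℝ => s ^ 2 * exp (-β * s ^ 2)) (Ioi 0) := by
  simpa using integrableOn_rpow_mul_exp_neg_mul_sq hβ (s := 2) (by norm_num)

lemma integral_sq_mul_exp_neg_div_sq_mul_sq (κ : ℝ) {ε : ℝ} (hε : 0 < ε) :
    ∫ s in Ioi (0 : ℝ), s ^ 2 * exp (-(κ / ε ^ 2) * s ^ 2)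
      = ε ^ 3 * ∫ u in Ioi (0 : ℝ), u ^ 2 * exp (-κ * u ^ 2) := by
  have h := integral_comp_mul_left_Ioi (fun s => s ^ 2 * exp (-(κ / ε ^ 2) * s ^ 2)) 0 hε
  rw [mul_zero, smul_eq_mul] at h
  have hscale : ∀ u : ℝ, (ε * u) ^ 2 * exp (-(κ / ε ^ 2) * (ε * u) ^ 2)
      = ε ^ 2 * (u ^ 2 * exp (-κ * u ^ 2)) := fun u => by
    field_simp
  simp only [hscale, integral_const_mul] at h
  rw [eq_inv_mul_iff_mul_eq₀ hε.ne'] at h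
  rw [← h]
  ring

lemma norm_rabiIntegrand_le {b y ty tw : ℝ} (hb : 0 < b) (ε : ℝ) (hty : ty ∈ Ioc (1 / b) y)
    (htw : tw ∈ Ioc (1 / b) ty) :
    ‖1 / (y * ty) ^ 4 * exp (1 / ε ^ 2 *
        (-b ^ 3 / 6 - rabiPotential b y + rabiPotential b tw - rabiPotential b ty))‖
      ≤ b ^ 4 / y ^ 4 * exp (-(b ^ 3 / 6 / ε ^ 2) * (1 - 1 / (b * y)) ^ 2) := by
  have hm : 0 < 1 / b := by positivity
  have hy : 0 < y := hm.trans (hty.1.trans_le hty.2)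
  have hmono : rabiPotential b tw ≤ rabiPotential b ty :=
    monotoneOn_rabiPotential hb htw.1.le (htw.1.trans_le htw.2).le htw.2
  have hquad := sq_one_sub_inv_le_rabiPotential_add hb.ne' hy
  rw [Real.norm_eq_abs, abs_of_nonneg (by positivity)]
  gcongr ?_ * exp ?_
  · calc 1 / (y * ty) ^ 4 ≤ 1 / (y * (1 / b)) ^ 4 := by gcongr; exact hty.1.le
      _ = b ^ 4 / y ^ 4 := by field_simp
  · rw [show -(b ^ 3 / 6 / ε ^ 2) * (1 - 1 / (b * y)) ^ 2
        = 1 / ε ^ 2 * -(b ^ 3 / 6 * (1 - 1 / (b * y)) ^ 2) by ring]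
    exact mul_le_mul_of_nonneg_left (by linarith) (by positivity)

lemma norm_rabiInnerIntegral_le {b y : ℝ} (hb : 0 < b) (ε : ℝ) (hy : 1 / b < y) :
    ‖∫ ty in (1 / b)..y, ∫ tw in (1 / b)..ty, 1 / (y * ty) ^ 4 * exp (1 / ε ^ 2 *
        (-b ^ 3 / 6 - rabiPotential b y + rabiPotential b tw - rabiPotential b ty))‖
      ≤ b ^ 5 * (1 / (b * y ^ 2) *
        ((1 - 1 / (b * y)) ^ 2 * exp (-(b ^ 3 / 6 / ε ^ 2) * (1 - 1 / (b * y)) ^ 2))) := by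
  have hy0 : 0 < y := lt_trans (by positivity) hy
  calc _ ≤ b ^ 4 / y ^ 4 * exp (-(b ^ 3 / 6 / ε ^ 2) * (1 - 1 / (b * y)) ^ 2)
        * (y - 1 / b) ^ 2 :=
        norm_iterated_intervalIntegral_le _ hy.le (by positivity)
          fun ty hty tw htw => norm_rabiIntegrand_le hb ε hty htw
    _ = _ := by field_simp

/-- (Uniform bound (4.26) for the second moment of the downcrossing time.) For every `b > 0`,
with `f(x) := 1/(3x³) − b/(2x²)`, the quantity
`(1/ε³)·∫_{1/b}^∞ ∫_{1/b}^{y} ∫_{1/b}^{ỹ} (y·ỹ)⁻⁴·exp((1/ε²)(−b³/6 − f(y) + f(w̃) − f(ỹ))) dw̃ dỹ dy`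
has finite limsup as `ε → 0⁺`, i.e. it is eventually bounded above near `0⁺`. -/
theorem statement17 (b : ℝ) (hb : 0 < b)
    (f : ℝ → ℝ) (hf : ∀ x : ℝ, f x = 1 / (3 * x ^ 3) - b / (2 * x ^ 2)) :
    ∃ C : ℝ, ∀ᶠ ε in 𝓝[>] (0 : ℝ),
      1 / ε ^ 3 *
          ∫ y in Ioi (1 / b), ∫ ty in (1 / b)..y, ∫ tw in (1 / b)..ty,
            1 / (y * ty) ^ 4 *
              Real.exp (1 / ε ^ 2 * (-b ^ 3 / 6 - f y + f tw - f ty)) ≤ C := by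
  obtain rfl : f = rabiPotential b := funext hf
  refine ⟨b ^ 5 * ∫ u in Ioi (0 : ℝ), u ^ 2 * exp (-(b ^ 3 / 6) * u ^ 2), ?_⟩
  filter_upwards [self_mem_nhdsWithin] with ε (hε : 0 < ε)
  let G : ℝ → ℝ := fun s => s ^ 2 * exp (-(b ^ 3 / 6 / ε ^ 2) * s ^ 2)
  have hG : IntegrableOn G (Ioi 0) := integrableOn_sq_mul_exp_neg_mul_sq (by positivity)
  have hmajorant : IntegrableOn (fun y => b ^ 5 * (1 / (b * y ^ 2) * G (1 - 1 / (b * y))))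
      (Ioi (1 / b)) :=
    ((integrableOn_comp_one_sub_inv_mul_iff hb G).2 (hG.mono_set Ioo_subset_Ioi_self)).const_mul _
  calc _ ≤ 1 / ε ^ 3 * ∫ y in Ioi (1 / b), b ^ 5 * (1 / (b * y ^ 2) * G (1 - 1 / (b * y))) :=
        mul_le_mul_of_nonneg_left ((le_norm_self _).trans (norm_integral_le_of_norm_le hmajorant
          (ae_restrict_of_forall_mem measurableSet_Ioi fun y hy =>
            norm_rabiInnerIntegral_le hb ε hy))) (by positivity)
    _ ≤ 1 / ε ^ 3 * (b ^ 5 * ∫ s in Ioi 0, G s) := by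
        rw [integral_const_mul]
        gcongr 1 / ε ^ 3 * (b ^ 5 * ?_)
        exact setIntegral_comp_one_sub_inv_mul_le hb hG fun s _ => by positivity
    _ = _ := by
        rw [integral_sq_mul_exp_neg_div_sq_mul_sq _ hε]
        field_simp
end
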